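/- arXiv:2510.10838 — 7 statements merged into one kernel-verified Lean document; each statement's English description precedes it below -/
import Mathlib

section
/- Helly property for median graphs: let G be a median graph and let Y_1, …, Y_n (n ≥ 1) be nonempty convex sets of vertices of G that pairwise intersect (Y_i ∩ Y_j ≠ ∅ for all i, j). Then the total intersection Y_1 ∩ ⋯ ∩ Y_n is nonempty. -/
/-- `m` is a median of `x`, `y`, `z` in the graph `G`. -/
def IsMedianOf {V : Type*} (G : SimpleGraph V) (m x y z : V) : Prop :=
  G.dist x y = G.dist x m + G.dist m y ∧
  G.dist y z = G.dist y m + G.dist m z ∧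
  G.dist x z = G.dist x m + G.dist m z

/-- A median graph: connected, and every triple of vertices has a unique median. -/
def MedianGraph {V : Type*} (G : SimpleGraph V) : Prop :=
  G.Connected ∧ ∀ x y z : V, ∃! m : V, IsMedianOf G m x y z

/-- A set `S` of vertices is convex: every vertex on a geodesic (a walk realizing
the graph distance) between two vertices of `S` belongs to `S`. -/
def ConvexSet {V : Type*} (G : SimpleGraph V) (S : Set V) : Prop :=
  ∀ u ∈ S, ∀ v ∈ S, ∀ w : G.Walk u v, w.length = G.dist u v → ∀ x ∈ w.support, x ∈ S

/-!
A convex set contains every vertex metrically between two of its points. Given three pairwise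
intersecting convex sets, pick `x ∈ B ∩ C`, `y ∈ A ∩ C`, `z ∈ A ∩ B`: the median of `x, y, z`
lies between `y` and `z`, between `x` and `z`, and between `x` and `y`, hence in `A ∩ B ∩ C`.
The case of finitely many sets follows by induction, replacing every `Y i` by `Y i ∩ Y a` for
one fixed `a`: by the three-set case these sets still pairwise intersect.
-/

theorem Finset.Nonempty.biInter_nonempty_of_helly_three {V ι : Type*} (P : Set V → Prop)
    (inter : ∀ S T, P S → P T → P (S ∩ T))
    (helly_three : ∀ A B C, P A → P B → P C → (A ∩ B).Nonempty → (A ∩ C).Nonempty →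
      (B ∩ C).Nonempty → (A ∩ B ∩ C).Nonempty)
    {s : Finset ι} (hs : s.Nonempty) (Y : ι → Set V) (hY : ∀ i, P (Y i))
    (hpair : ∀ i j, (Y i ∩ Y j).Nonempty) : (⋂ i ∈ s, Y i).Nonempty := by
  induction hs using Finset.Nonempty.cons_induction generalizing Y with
  | singleton a => simpa using hpair a a
  | cons a s _ hs ih =>
    obtain ⟨x, hx⟩ := ih (fun i ↦ Y i ∩ Y a) (fun i ↦ inter _ _ (hY i) (hY a))
      (fun i j ↦ by
        obtain ⟨m, ⟨hmi, hmj⟩, hma⟩ := helly_three _ _ _ (hY i) (hY j) (hY a)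
          (hpair i j) (hpair i a) (hpair j a)
        exact ⟨m, ⟨hmi, hma⟩, hmj, hma⟩)
    rw [Set.mem_iInter₂] at hx
    obtain ⟨b, hb⟩ := hs
    exact ⟨x, Set.mem_iInter₂.mpr <|
      (Finset.forall_mem_cons _ _).mpr ⟨(hx b hb).2, fun i hi ↦ (hx i hi).1⟩⟩

namespace ConvexSet

variable {V : Type*} {G : SimpleGraph V}

theorem inter {S T : Set V} (hS : ConvexSet G S) (hT : ConvexSet G T) :
    ConvexSet G (S ∩ T) :=
  fun u hu v hv w hw x hx ↦ ⟨hS u hu.1 v hv.1 w hw x hx, hT u hu.2 v hv.2 w hw x hx⟩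

theorem mem_of_dist_eq_add (hG : G.Connected) {S : Set V} (hS : ConvexSet G S) {u v m : V}
    (hu : u ∈ S) (hv : v ∈ S) (h : G.dist u v = G.dist u m + G.dist m v) : m ∈ S := by
  obtain ⟨p, hp⟩ := hG.exists_walk_length_eq_dist u m
  obtain ⟨q, hq⟩ := hG.exists_walk_length_eq_dist m v
  refine hS u hu v hv (p.append q) ?_ m ?_
  · rw [SimpleGraph.Walk.length_append, hp, hq, h]
  · exact (p.mem_support_append_iff q).mpr (Or.inr q.start_mem_support)

end ConvexSet

theorem MedianGraph.helly_three {V : Type*} {G : SimpleGraph V} (hG : MedianGraph G)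
    {A B C : Set V} (hA : ConvexSet G A) (hB : ConvexSet G B) (hC : ConvexSet G C)
    (hAB : (A ∩ B).Nonempty) (hAC : (A ∩ C).Nonempty) (hBC : (B ∩ C).Nonempty) :
    (A ∩ B ∩ C).Nonempty := by
  obtain ⟨x, hxB, hxC⟩ := hBC
  obtain ⟨y, hyA, hyC⟩ := hAC
  obtain ⟨z, hzA, hzB⟩ := hAB
  obtain ⟨m, ⟨hxy, hyz, hxz⟩, -⟩ := hG.2 x y z
  exact ⟨m, ⟨hA.mem_of_dist_eq_add hG.1 hyA hzA hyz, hB.mem_of_dist_eq_add hG.1 hxB hzB hxz⟩,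
    hC.mem_of_dist_eq_add hG.1 hxC hyC hxy⟩

theorem helly_median_general {V : Type*} (G : SimpleGraph V) (hG : MedianGraph G)
    (n : ℕ) (hn : 1 ≤ n) (Y : Fin n → Set V)
    (hconv : ∀ i, ConvexSet G (Y i))
    (hpair : ∀ i j, (Y i ∩ Y j).Nonempty) :
    (⋂ i, Y i).Nonempty := by
  have huniv : (Finset.univ : Finset (Fin n)).Nonempty := ⟨⟨0, hn⟩, Finset.mem_univ _⟩
  simpa using huniv.biInter_nonempty_of_helly_three (ConvexSet G) (fun _ _ ↦ ConvexSet.inter)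
    (fun _ _ _ ↦ hG.helly_three) Y hconv hpair

/-- Helly property for median graphs: finitely many nonempty convex sets of vertices
that pairwise intersect have a common point. -/
theorem helly_median {V : Type*} (G : SimpleGraph V) (hG : MedianGraph G)
    (n : ℕ) (hn : 1 ≤ n) (Y : Fin n → Set V)
    (hne : ∀ i, (Y i).Nonempty) (hconv : ∀ i, ConvexSet G (Y i))
    (hpair : ∀ i j, (Y i ∩ Y j).Nonempty) :
    (⋂ i, Y i).Nonempty :=
  helly_median_general G hG n hn Y hconv hpair
end

section
/- Let G be a median graph and H a hyperplane of G. Then the graph obtained from G by deleting the edges belonging to H has exactly two connected components, and the vertex set of each of these two components is a convex set of vertices of G. -/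
/-- Two edges are square-opposite: they are opposite sides of a 4-cycle. -/
def SquareOpposite {V : Type*} (G : SimpleGraph V) (e f : Sym2 V) : Prop :=
  ∃ a b c d : V, a ≠ b ∧ a ≠ c ∧ a ≠ d ∧ b ≠ c ∧ b ≠ d ∧ c ≠ d ∧
    G.Adj a b ∧ G.Adj c d ∧ G.Adj a c ∧ G.Adj b d ∧ e = s(a, b) ∧ f = s(c, d)

/-- A hyperplane: an equivalence class of edges under the equivalence relation
generated by square-opposition. -/
def IsHyperplane {V : Type*} (G : SimpleGraph V) (H : Set (Sym2 V)) : Prop :=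
  ∃ e ∈ G.edgeSet, H = {f | Relation.EqvGen (SquareOpposite G) e f}

open SimpleGraph Relation

section

variable {V : Type*}

def SimpleGraph.halfspace (G : SimpleGraph V) (a b : V) : Set V := {v | G.dist v a < G.dist v b}

namespace SimpleGraph

variable {G : SimpleGraph V} {S : Set V} {a b u v : V}

@[simp]
lemma mem_halfspace : v ∈ G.halfspace a b ↔ G.dist v a < G.dist v b := Iff.rfl

lemma Adj.left_mem_halfspace (hab : G.Adj a b) : a ∈ G.halfspace a b := by
  simp [dist_eq_one_iff_adj.mpr hab]

lemma right_notMem_halfspace : b ∉ G.halfspace a b := by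
  simp

lemma Connected.exists_adj_dist_add_one_eq (hG : G.Connected) (hne : u ≠ v) :
    ∃ w, G.Adj u w ∧ G.dist w v + 1 = G.dist u v := by
  obtain ⟨p, hp⟩ := hG.exists_walk_length_eq_dist u v
  cases p with
  | nil => exact absurd rfl hne
  | cons h p =>
    have := length_eq_dist_of_subwalk hp (p.isSubwalk_cons h)
    rw [Walk.length_cons] at hp
    exact ⟨_, h, by omega⟩

lemma reachable_iff_of_adj_iff (hadj : ∀ u v, G.Adj u v → (u ∈ S ↔ v ∈ S))
    (hS : ∀ u ∈ S, ∀ v ∈ S, G.Reachable u v) (hSc : ∀ u ∉ S, ∀ v ∉ S, G.Reachable u v)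
    (u v : V) : G.Reachable u v ↔ (u ∈ S ↔ v ∈ S) := by
  constructor
  · rintro ⟨p⟩
    induction p with
    | nil => exact Iff.rfl
    | cons h _ ih => exact (hadj _ _ h).trans ih
  · intro huv
    by_cases hu : u ∈ S
    · exact hS u hu v (huv.mp hu)
    · exact hSc u hu v (mt huv.mpr hu)

lemma ConnectedComponent.supp_eq_or_eq_compl_of_reachable_iff
    (h : ∀ u v, G.Reachable u v ↔ (u ∈ S ↔ v ∈ S)) (c : G.ConnectedComponent) :
    c.supp = S ∨ c.supp = Sᶜ := by
  induction c using ConnectedComponent.ind with | _ v => ?_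
  have hsupp : (G.connectedComponentMk v).supp = {w | w ∈ S ↔ v ∈ S} := by
    ext w
    rw [ConnectedComponent.mem_supp_iff, ConnectedComponent.eq, h]
    rfl
  by_cases hv : v ∈ S
  · exact .inl (by simp [hsupp, hv])
  · exact .inr (by ext; simp [hsupp, hv])

lemma exists_ne_forall_eq_or_eq_of_reachable_iff
    (h : ∀ u v, G.Reachable u v ↔ (u ∈ S ↔ v ∈ S)) (ha : a ∈ S) (hb : b ∉ S) :
    ∃ c₁ c₂ : G.ConnectedComponent, c₁ ≠ c₂ ∧ ∀ c, c = c₁ ∨ c = c₂ := by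
  refine ⟨G.connectedComponentMk a, G.connectedComponentMk b,
    fun hab => hb (((h a b).mp (ConnectedComponent.eq.mp hab)).mp ha), fun c => ?_⟩
  induction c using ConnectedComponent.ind with | _ v => ?_
  simp only [ConnectedComponent.eq, h]
  by_cases hv : v ∈ S <;> simp [hv, ha, hb]

end SimpleGraph

lemma SquareOpposite.symm {G : SimpleGraph V} {e f : Sym2 V} (h : SquareOpposite G e f) :
    SquareOpposite G f e := by
  obtain ⟨a, b, c, d, hab, hac, had, hbc, hbd, hcd, aab, acd, aac, abd, rfl, rfl⟩ := h
  exact ⟨c, d, a, b, hcd, hac.symm, hbc.symm, had.symm, hbd.symm, hab,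
    acd, aab, aac.symm, abd.symm, rfl, rfl⟩

namespace MedianGraph

variable {G : SimpleGraph V} {a b p q r t u v x y : V}

lemma dist_eq_dist_add_one_of_adj (hG : MedianGraph G) (u : V) (hpq : G.Adj p q) :
    G.dist u p = G.dist u q + 1 ∨ G.dist u q = G.dist u p + 1 := by
  obtain ⟨m, hup, hpq', huq⟩ := (hG.2 u p q).exists
  have h₁ : G.dist p q = 1 := dist_eq_one_iff_adj.mpr hpq
  have h₂ : G.dist q p = 1 := dist_eq_one_iff_adj.mpr hpq.symm
  -- the median lies on the edge `pq`
  rcases (by omega : G.dist p m = 0 ∨ G.dist m q = 0) with h | h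
  · obtain rfl := hG.1.dist_eq_zero_iff.mp h
    omega
  · obtain rfl := hG.1.dist_eq_zero_iff.mp h
    omega

lemma dist_eq_dist_add_one_of_adj' (hG : MedianGraph G) (u : V) (hpq : G.Adj p q) :
    G.dist p u = G.dist q u + 1 ∨ G.dist q u = G.dist p u + 1 := by
  rw [dist_comm (u := p), dist_comm (u := q)]
  exact hG.dist_eq_dist_add_one_of_adj u hpq

lemma dist_eq_two (hG : MedianGraph G) (hpq : G.Adj p q) (hqr : G.Adj q r) (hpr : p ≠ r) :
    G.dist p r = 2 := by
  have hle : G.dist p r ≤ 2 := dist_le (.cons hpq (.cons hqr .nil))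
  have hpos : 0 < G.dist p r := hG.1.pos_dist_of_ne hpr
  have := hG.dist_eq_dist_add_one_of_adj p hqr
  have := dist_eq_one_iff_adj.mpr hpq
  omega

lemma compl_halfspace (hG : MedianGraph G) (hab : G.Adj a b) :
    (G.halfspace a b)ᶜ = G.halfspace b a := by
  ext v
  have := hG.dist_eq_dist_add_one_of_adj v hab
  simp only [Set.mem_compl_iff, mem_halfspace]
  omega

lemma halfspace_subset_of_square (hG : MedianGraph G) (hpq : G.Adj p q) (hrt : G.Adj r t)
    (hpr : G.Adj p r) (hqt : G.Adj q t) (hqr : q ≠ r) (hpt : p ≠ t) :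
    G.halfspace p q ⊆ G.halfspace r t := by
  intro w hw
  rw [mem_halfspace] at hw ⊢
  by_contra hwt
  have := hG.dist_eq_dist_add_one_of_adj w hpq
  have := hG.dist_eq_dist_add_one_of_adj w hrt
  have := hG.dist_eq_dist_add_one_of_adj w hpr
  have := hG.dist_eq_dist_add_one_of_adj w hqt
  have hpq₁ := dist_eq_one_iff_adj.mpr hpq
  have hqp₁ := dist_eq_one_iff_adj.mpr hpq.symm
  have hpr₁ := dist_eq_one_iff_adj.mpr hpr
  have htr₁ := dist_eq_one_iff_adj.mpr hrt.symm
  have hqt₁ := dist_eq_one_iff_adj.mpr hqt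
  have htq₁ := dist_eq_one_iff_adj.mpr hqt.symm
  have hqr₂ := hG.dist_eq_two hpq.symm hpr hqr
  -- the only consistent distances make both `p` and `t` medians of `w`, `q`, `r`
  have hp : IsMedianOf G p w q r := ⟨by omega, by omega, by omega⟩
  have ht : IsMedianOf G t w q r := ⟨by omega, by omega, by omega⟩
  exact hpt ((hG.2 w q r).unique hp ht)

lemma halfspace_eq_of_square (hG : MedianGraph G) (hpq : G.Adj p q) (hrt : G.Adj r t)
    (hpr : G.Adj p r) (hqt : G.Adj q t) (hqr : q ≠ r) (hpt : p ≠ t) :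
    G.halfspace p q = G.halfspace r t :=
  (hG.halfspace_subset_of_square hpq hrt hpr hqt hqr hpt).antisymm
    (hG.halfspace_subset_of_square hrt hpq hpr.symm hqt.symm hpt.symm hqr.symm)

lemma exists_halfspace_eq_of_eqvGen (hG : MedianGraph G) {f : Sym2 V}
    (h : EqvGen (SquareOpposite G) s(a, b) f) :
    ∃ y x, f = s(y, x) ∧ G.halfspace y x = G.halfspace a b := by
  let P (f : Sym2 V) : Prop := ∃ y x, f = s(y, x) ∧ G.halfspace y x = G.halfspace a b
  have hstep {e f : Sym2 V} (hef : SquareOpposite G e f) : P e → P f := by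
    obtain ⟨p, q, r, t, -, -, hpt, hqr, -, -, hpq, hrt, hpr, hqt, rfl, rfl⟩ := hef
    rintro ⟨y, x, hyx, hW⟩
    rcases Sym2.eq_iff.mp hyx with ⟨hp, hq⟩ | ⟨hp, hq⟩
    · rw [← hp, ← hq] at hW
      exact ⟨r, t, rfl, (hG.halfspace_eq_of_square hpq hrt hpr hqt hqr hpt).symm.trans hW⟩
    · rw [← hp, ← hq] at hW
      refine ⟨t, r, Sym2.eq_swap, ?_⟩
      exact (hG.halfspace_eq_of_square hpq.symm hrt.symm hqt hpr hpt hqr).symm.trans hW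
  have hiff {e f : Sym2 V} (hef : EqvGen (SquareOpposite G) e f) : P e ↔ P f := by
    induction hef with
    | rel _ _ hr => exact ⟨hstep hr, hstep hr.symm⟩
    | refl => exact Iff.rfl
    | symm _ _ _ ih => exact ih.symm
    | trans _ _ _ _ _ ih₁ ih₂ => exact ih₁.trans ih₂
  exact (hiff h).mp ⟨a, b, rfl, rfl⟩

lemma halfspace_eq_of_eqvGen (hG : MedianGraph G)
    (h : EqvGen (SquareOpposite G) s(a, b) s(y, x)) (hy : y ∈ G.halfspace a b) :
    G.halfspace y x = G.halfspace a b := by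
  obtain ⟨y', x', he, hW⟩ := hG.exists_halfspace_eq_of_eqvGen h
  rcases Sym2.eq_iff.mp he with ⟨rfl, rfl⟩ | ⟨rfl, rfl⟩
  · exact hW
  · rw [← hW] at hy
    exact absurd hy right_notMem_halfspace

lemma exists_squareOpposite_dist_lt (hG : MedianGraph G) (hab : G.Adj a b) (hyx : G.Adj y x)
    (hy : y ∈ G.halfspace a b) (hx : x ∉ G.halfspace a b) (hya : y ≠ a) :
    ∃ y' x', G.Adj y' x' ∧ y' ∈ G.halfspace a b ∧ x' ∉ G.halfspace a b ∧
      G.dist y' a < G.dist y a ∧ SquareOpposite G s(y', x') s(y, x) := by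
  rw [mem_halfspace] at hy
  rw [mem_halfspace, not_lt] at hx
  obtain ⟨y', hyy', hy'a⟩ := hG.1.exists_adj_dist_add_one_eq hya
  have := hG.dist_eq_dist_add_one_of_adj' a hyx
  have := hG.dist_eq_dist_add_one_of_adj' b hyx
  have := hG.dist_eq_dist_add_one_of_adj' b hyy'
  have := hG.dist_eq_dist_add_one_of_adj x hab
  have := hG.dist_eq_dist_add_one_of_adj y hab
  have := hG.dist_eq_dist_add_one_of_adj y' hab
  have hxy' : G.dist x y' = 2 := hG.dist_eq_two hyx.symm hyy' (by rintro rfl; omega)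
  obtain ⟨m, hxy'm, hy'bm, hxbm⟩ := (hG.2 x y' b).exists
  have : G.dist y' m = G.dist m y' := dist_comm
  have hxm : G.Adj x m := dist_eq_one_iff_adj.mp (by omega)
  have hmy' : G.Adj m y' := dist_eq_one_iff_adj.mp (by omega)
  have := hG.dist_eq_dist_add_one_of_adj' a hxm
  have := hG.dist_eq_dist_add_one_of_adj' a hmy'
  refine ⟨y', m, hmy'.symm, by rw [mem_halfspace]; omega, by rw [mem_halfspace]; omega, by omega,
    y', m, y, x, hmy'.ne.symm, hyy'.ne.symm, by rintro rfl; omega, by rintro rfl; omega,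
    hxm.ne.symm, hyx.ne, hmy'.symm, hyx, hyy'.symm, hxm.symm, rfl, rfl⟩

lemma eqvGen_of_mem_halfspace_of_notMem (hG : MedianGraph G) (hab : G.Adj a b)
    (hyx : G.Adj y x) (hy : y ∈ G.halfspace a b) (hx : x ∉ G.halfspace a b) :
    EqvGen (SquareOpposite G) s(a, b) s(y, x) := by
  induction hk : G.dist y a using Nat.strong_induction_on generalizing y x with | _ k ih => ?_
  by_cases hya : y = a
  · subst hya
    rw [mem_halfspace, not_lt] at hx
    have := hG.dist_eq_dist_add_one_of_adj x hab
    have := dist_eq_one_iff_adj.mpr hyx.symm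
    obtain rfl : x = b := hG.1.dist_eq_zero_iff.mp (by omega)
    exact EqvGen.refl _
  · obtain ⟨y', x', hy'x', hy', hx', hlt, hsq⟩ := hG.exists_squareOpposite_dist_lt hab hyx hy hx hya
    exact (ih _ (hk ▸ hlt) hy'x' hy' hx' rfl).trans _ _ _ (EqvGen.rel _ _ hsq)

lemma convexSet_halfspace (hG : MedianGraph G) (hab : G.Adj a b) :
    ConvexSet G (G.halfspace a b) := by
  intro u hu v hv p hp
  induction p with
  | nil => simpa using hu
  | @cons u y v huy p ih =>
    have hp' : p.length = G.dist y v := length_eq_dist_of_subwalk hp (p.isSubwalk_cons huy)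
    have hy : y ∈ G.halfspace a b := by
      by_contra hy
      -- `uy` lies on the hyperplane, so `W(u,y) = W(a,b)`: from `u` the step to `y` moves away from `v`
      have hW := hG.halfspace_eq_of_eqvGen (hG.eqvGen_of_mem_halfspace_of_notMem hab huy hu hy) hu
      rw [← hW, mem_halfspace, dist_comm, dist_comm (u := v)] at hv
      rw [Walk.length_cons] at hp
      omega
    simp only [Walk.support_cons, List.mem_cons, forall_eq_or_imp]
    exact ⟨hu, ih hy hv hp'⟩

lemma reachable_deleteEdges_of_mem_halfspace (hG : MedianGraph G) (hab : G.Adj a b)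
    (hu : u ∈ G.halfspace a b) (hv : v ∈ G.halfspace a b) :
    (G.deleteEdges {f | EqvGen (SquareOpposite G) s(a, b) f}).Reachable u v := by
  obtain ⟨p, hp⟩ := hG.1.exists_walk_length_eq_dist u v
  have hsupp := hG.convexSet_halfspace hab u hu v hv p hp
  refine ⟨p.transfer _ fun e he => ?_⟩
  induction e using Sym2.ind with | _ x y => ?_
  rw [edgeSet_deleteEdges]
  refine ⟨p.edges_subset_edgeSet he, fun hxy => ?_⟩
  have hx := hsupp x (p.fst_mem_support_of_mem_edges he)
  have hy := hsupp y (p.snd_mem_support_of_mem_edges he)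
  rw [← hG.halfspace_eq_of_eqvGen hxy hx] at hy
  exact right_notMem_halfspace hy

lemma reachable_deleteEdges_iff (hG : MedianGraph G) (hab : G.Adj a b) (u v : V) :
    (G.deleteEdges {f | EqvGen (SquareOpposite G) s(a, b) f}).Reachable u v ↔
      (u ∈ G.halfspace a b ↔ v ∈ G.halfspace a b) := by
  refine reachable_iff_of_adj_iff (fun x y hxy => ?_)
    (fun _ hu _ hv => hG.reachable_deleteEdges_of_mem_halfspace hab hu hv)
    (fun u hu v hv => ?_) u v
  · rw [deleteEdges_adj] at hxy
    by_contra hne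
    apply hxy.2
    rcases (by tauto : x ∈ G.halfspace a b ∧ y ∉ G.halfspace a b ∨
        y ∈ G.halfspace a b ∧ x ∉ G.halfspace a b) with ⟨hx, hy⟩ | ⟨hy, hx⟩
    · exact hG.eqvGen_of_mem_halfspace_of_notMem hab hxy.1 hx hy
    · rw [Set.mem_ofPred_eq, Sym2.eq_swap (a := x)]
      exact hG.eqvGen_of_mem_halfspace_of_notMem hab hxy.1.symm hy hx
  · rw [← Set.mem_compl_iff, hG.compl_halfspace hab] at hu hv
    rw [Sym2.eq_swap]
    exact hG.reachable_deleteEdges_of_mem_halfspace hab.symm hu hv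

end MedianGraph

end

/-- Deleting the edges of a hyperplane of a median graph yields exactly two connected
components, whose vertex sets (the halfspaces) are convex. -/
theorem hyperplane_two_convex_halfspaces {V : Type*} (G : SimpleGraph V)
    (hG : MedianGraph G) (H : Set (Sym2 V)) (hH : IsHyperplane G H) :
    (∃ c₁ c₂ : (G.deleteEdges H).ConnectedComponent,
        c₁ ≠ c₂ ∧ ∀ c : (G.deleteEdges H).ConnectedComponent, c = c₁ ∨ c = c₂) ∧
      ∀ c : (G.deleteEdges H).ConnectedComponent, ConvexSet G c.supp := by
  obtain ⟨e, he, rfl⟩ := hH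
  induction e using Sym2.ind with | _ a b => ?_
  have hab : G.Adj a b := he
  have hreach := hG.reachable_deleteEdges_iff hab
  refine ⟨exists_ne_forall_eq_or_eq_of_reachable_iff hreach hab.left_mem_halfspace
    right_notMem_halfspace, fun c => ?_⟩
  rcases c.supp_eq_or_eq_compl_of_reachable_iff hreach with h | h <;> rw [h]
  · exact hG.convexSet_halfspace hab
  · rw [hG.compl_halfspace hab]
    exact hG.convexSet_halfspace hab.symm
end

section
/- Let G be a median graph and u, v vertices of G. A walk from u to v is a geodesic (i.e., its length equals dist(u,v)) if and only if, for every hyperplane H of G, at most one edge of the walk belongs to H. In particular, the set of hyperplanes separating u and v is finite and its cardinality equals dist(u,v). -/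
/-- `u` and `v` are separated by the hyperplane `H`: every walk between them
crosses `H`, i.e. has an edge belonging to `H`. -/
def SeparatedBy {V : Type*} (G : SimpleGraph V) (H : Set (Sym2 V)) (u v : V) : Prop :=
  ∀ w : G.Walk u v, ∃ e ∈ w.edges, e ∈ H

namespace MGAux
open SimpleGraph

variable {V : Type*} {G : SimpleGraph V}

lemma dist_ne (hG : MedianGraph G) {a b : V} (hab : G.Adj a b) (x : V) :
    G.dist x a ≠ G.dist x b := by
  intro h
  obtain ⟨hc, hm⟩ := hG
  obtain ⟨m, ⟨h1, h2, h3⟩, -⟩ := hm x a b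
  have hab1 : G.dist a b = 1 := dist_eq_one_iff_adj.mpr hab
  have e2 : G.dist a m + G.dist m b = 1 := by rw [← h2, hab1]
  rcases (by omega : G.dist a m = 0 ∨ G.dist m b = 0) with h0 | h0
  · have hma : G.dist m a = 0 := by rwa [SimpleGraph.dist_comm]
    omega
  · have ham : G.dist a m = 1 := by omega
    have hma : G.dist m a = 1 := by rwa [SimpleGraph.dist_comm]
    omega

lemma adj_dist_cases (hG : MedianGraph G) {a b : V} (hab : G.Adj a b) (x : V) :
    G.dist x b = G.dist x a + 1 ∨ G.dist x a = G.dist x b + 1 := by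
  have hab1 : G.dist a b = 1 := dist_eq_one_iff_adj.mpr hab
  have hba1 : G.dist b a = 1 := by rw [SimpleGraph.dist_comm, hab1]
  have t1 : G.dist x b ≤ G.dist x a + G.dist a b := hG.1.dist_triangle
  have t2 : G.dist x a ≤ G.dist x b + G.dist b a := hG.1.dist_triangle
  have hne := dist_ne hG hab x
  omega

lemma no_triangle (hG : MedianGraph G) {a b c : V} (h1 : G.Adj a b) (h2 : G.Adj b c)
    (h3 : G.Adj a c) : False := by
  apply dist_ne hG h2 a
  rw [dist_eq_one_iff_adj.mpr h1, dist_eq_one_iff_adj.mpr h3]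

end MGAux
namespace MGAux
open SimpleGraph

variable {V : Type*} {G : SimpleGraph V}

lemma dist_two (hG : MedianGraph G) {x y z : V} (hxy : x ≠ y) (hnadj : ¬ G.Adj x y)
    (h1 : G.Adj x z) (h2 : G.Adj z y) : G.dist x y = 2 := by
  have hle : G.dist x y ≤ G.dist x z + G.dist z y := hG.1.dist_triangle
  have e1 : G.dist x z = 1 := dist_eq_one_iff_adj.mpr h1
  have e2 : G.dist z y = 1 := dist_eq_one_iff_adj.mpr h2
  have h0 : G.dist x y ≠ 0 := fun h => hxy (hG.1.dist_eq_zero_iff.mp h)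
  have h1' : G.dist x y ≠ 1 := fun h => hnadj (dist_eq_one_iff_adj.mp h)
  omega

lemma square_half (hG : MedianGraph G) {a b c d : V} (hab : G.Adj a b) (hcd : G.Adj c d)
    (hac : G.Adj a c) (hbd : G.Adj b d) (hbc : b ≠ c) (had : a ≠ d) (x : V)
    (h : G.dist x a < G.dist x b) : G.dist x c < G.dist x d := by
  have hxb : G.dist x b = G.dist x a + 1 := by
    rcases adj_dist_cases hG hab x with h' | h' <;> omega
  rcases adj_dist_cases hG hac x with hc1 | hc1
  · -- dist x c = dist x a + 1
    rcases adj_dist_cases hG hbd x with hd1 | hd1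
    · -- dist x d = dist x b + 1
      omega
    · -- dist x b = dist x d + 1, so dist x d = dist x a : bad case
      exfalso
      obtain ⟨m, ⟨h1, h2, h3⟩, -⟩ := hG.2 x a d
      have had2 : G.dist a d = 2 := by
        refine dist_two hG had (fun hAd => no_triangle hG hab hbd hAd) hab hbd
      have hmacomm : G.dist a m = G.dist m a := SimpleGraph.dist_comm
      have hma : G.dist m a = 1 := by omega
      have hmd : G.dist m d = 1 := by omega
      have hxm : G.dist x m + 1 = G.dist x a := by omega
      have hadjma : G.Adj m a := dist_eq_one_iff_adj.mp hma
      have hadjmd : G.Adj m d := dist_eq_one_iff_adj.mp hmd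
      have hmb : m ≠ b := fun h => by rw [h] at hxm; omega
      have hmc : m ≠ c := fun h => by rw [h] at hxm; omega
      have dbc : G.dist b c = 2 :=
        dist_two hG hbc (fun hA => no_triangle hG hab hA hac) hab.symm hac
      have dcm : G.dist c m = 2 :=
        dist_two hG (Ne.symm hmc) (fun hA => no_triangle hG hac hA hadjma.symm) hac.symm hadjma.symm
      have dbm : G.dist b m = 2 :=
        dist_two hG (Ne.symm hmb) (fun hA => no_triangle hG hab hA hadjma.symm) hab.symm hadjma.symm
      have dba : G.dist b a = 1 := dist_eq_one_iff_adj.mpr hab.symm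
      have dAc : G.dist a c = 1 := dist_eq_one_iff_adj.mpr hac
      have dca : G.dist c a = 1 := dist_eq_one_iff_adj.mpr hac.symm
      have dam : G.dist a m = 1 := by omega
      have dbd' : G.dist b d = 1 := dist_eq_one_iff_adj.mpr hbd
      have ddc : G.dist d c = 1 := dist_eq_one_iff_adj.mpr hcd.symm
      have dcd' : G.dist c d = 1 := dist_eq_one_iff_adj.mpr hcd
      have ddm : G.dist d m = 1 := by rw [SimpleGraph.dist_comm]; exact hmd
      obtain ⟨mm, -, huniq⟩ := hG.2 b c m
      have hA : IsMedianOf G a b c m := by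
        refine ⟨?_, ?_, ?_⟩ <;> omega
      have hD : IsMedianOf G d b c m := by
        refine ⟨?_, ?_, ?_⟩ <;> omega
      exact had ((huniq a hA).trans (huniq d hD).symm)
  · -- dist x a = dist x c + 1
    rcases adj_dist_cases hG hcd x with hd1 | hd1
    · omega
    · -- dist x c = dist x d + 1 : impossible since dist x d ≥ dist x b - 1
      have : G.dist x b ≤ G.dist x d + G.dist d b := hG.1.dist_triangle
      have hdb : G.dist d b = 1 := dist_eq_one_iff_adj.mpr hbd.symm
      omega

lemma square_iff (hG : MedianGraph G) {a b c d : V} (hab : G.Adj a b) (hcd : G.Adj c d)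
    (hac : G.Adj a c) (hbd : G.Adj b d) (hbc : b ≠ c) (had : a ≠ d) (x : V) :
    G.dist x a < G.dist x b ↔ G.dist x c < G.dist x d :=
  ⟨square_half hG hab hcd hac hbd hbc had x,
   square_half hG hcd hab hac.symm hbd.symm had.symm hbc.symm x⟩

end MGAux
namespace MGAux
open SimpleGraph

variable {V : Type*} {G : SimpleGraph V}

/-- `x` and `y` are on opposite sides of the edge `(a, b)`. -/
def Opp (G : SimpleGraph V) (a b x y : V) : Prop :=
  (G.dist x a < G.dist x b ∧ G.dist y b < G.dist y a) ∨
  (G.dist x b < G.dist x a ∧ G.dist y a < G.dist y b)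

lemma opp_comm {a b x y : V} : Opp G a b x y ↔ Opp G b a x y := by
  unfold Opp; tauto

def EOpp (G : SimpleGraph V) (e : Sym2 V) (x y : V) : Prop :=
  ∃ a b, e = s(a, b) ∧ Opp G a b x y

lemma eopp_mk {a b x y : V} : EOpp G s(a, b) x y ↔ Opp G a b x y := by
  constructor
  · rintro ⟨a', b', he, hopp⟩
    rcases Sym2.eq_iff.mp he with ⟨rfl, rfl⟩ | ⟨rfl, rfl⟩
    · exact hopp
    · exact opp_comm.mpr hopp
  · exact fun h => ⟨a, b, rfl, h⟩

lemma opp_char (hG : MedianGraph G) {a b : V} (hab : G.Adj a b) (x y : V) :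
    Opp G a b x y ↔ ¬(G.dist x a < G.dist x b ↔ G.dist y a < G.dist y b) := by
  have hx := dist_ne hG hab x
  have hy := dist_ne hG hab y
  unfold Opp
  omega

lemma opp_self_edge {x y : V} (h : G.Adj x y) : Opp G x y x y := by
  have h1 : G.dist x y = 1 := dist_eq_one_iff_adj.mpr h
  have h2 : G.dist y x = 1 := dist_eq_one_iff_adj.mpr h.symm
  have h3 : G.dist x x = 0 := SimpleGraph.dist_self
  have h4 : G.dist y y = 0 := SimpleGraph.dist_self
  unfold Opp
  omega

lemma eopp_sqop (hG : MedianGraph G) {e f : Sym2 V} (h : SquareOpposite G e f) :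
    EOpp G e = EOpp G f := by
  obtain ⟨a, b, c, d, hab', hac', had', hbc', hbd', hcd', hab, hcd, hac, hbd, rfl, rfl⟩ := h
  funext x y
  apply propext
  rw [eopp_mk, eopp_mk]
  have h1 := square_iff hG hab hcd hac hbd hbc' had' x
  have h2 := square_iff hG hab hcd hac hbd hbc' had' y
  have h3 := square_iff hG hab.symm hcd.symm hbd hac had' hbc' x
  have h4 := square_iff hG hab.symm hcd.symm hbd hac had' hbc' y
  unfold Opp
  tauto

lemma eopp_eqvgen (hG : MedianGraph G) {e f : Sym2 V}
    (h : Relation.EqvGen (SquareOpposite G) e f) : EOpp G e = EOpp G f := by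
  induction h with
  | rel _ _ h => exact eopp_sqop hG h
  | refl => rfl
  | symm _ _ _ ih => exact ih.symm
  | trans _ _ _ _ _ ih1 ih2 => exact ih1.trans ih2

end MGAux
namespace MGAux
open SimpleGraph

variable {V : Type*} {G : SimpleGraph V}

lemma theta_aux (hG : MedianGraph G) {a b : V} (hab : G.Adj a b) :
    ∀ k, ∀ x y : V, G.dist x a = k → G.Adj x y → G.dist x a < G.dist x b →
      G.dist y b < G.dist y a → Relation.EqvGen (SquareOpposite G) s(a, b) s(x, y) := by
  intro k
  induction k using Nat.strong_induction_on with
  | _ k ih =>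
    intro x y hk hxy hx hy
    have hxb : G.dist x b = k + 1 := by
      rcases adj_dist_cases hG hab x with h' | h' <;> omega
    have cax := adj_dist_cases hG hxy a
    have cbx := adj_dist_cases hG hxy b
    have e1 : G.dist a x = G.dist x a := SimpleGraph.dist_comm
    have e2 : G.dist a y = G.dist y a := SimpleGraph.dist_comm
    have e3 : G.dist b x = G.dist x b := SimpleGraph.dist_comm
    have e4 : G.dist b y = G.dist y b := SimpleGraph.dist_comm
    have hya : G.dist y a = k + 1 := by omega
    have hyb : G.dist y b = k := by omega
    by_cases hk0 : k = 0
    · subst hk0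
      have hxa : x = a := hG.1.dist_eq_zero_iff.mp hk
      have hyb' : y = b := hG.1.dist_eq_zero_iff.mp hyb
      subst hxa; subst hyb'
      exact Relation.EqvGen.refl _
    · obtain ⟨w, hw⟩ := hG.1.exists_walk_length_eq_dist x a
      cases w with
      | nil => rw [Walk.length_nil] at hw; omega
      | @cons _ x₁ _ h' p =>
        rw [Walk.length_cons, hk] at hw
        have hp : p.length = k - 1 := by omega
        have hx1a : G.dist x₁ a = k - 1 := by
          have hle : G.dist x₁ a ≤ k - 1 := hp ▸ SimpleGraph.dist_le p
          have ht : G.dist x a ≤ G.dist x x₁ + G.dist x₁ a := hG.1.dist_triangle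
          have : G.dist x x₁ = 1 := dist_eq_one_iff_adj.mpr h'
          omega
        have hx1b : G.dist x₁ b = k := by
          have c := adj_dist_cases hG hab x₁
          have ht : G.dist x b ≤ G.dist x x₁ + G.dist x₁ b := hG.1.dist_triangle
          have : G.dist x x₁ = 1 := dist_eq_one_iff_adj.mpr h'
          omega
        have hx1y : G.dist x₁ y = 2 := by
          have t1 : G.dist y a ≤ G.dist y x₁ + G.dist x₁ a := hG.1.dist_triangle
          have t2 : G.dist x₁ y ≤ G.dist x₁ x + G.dist x y := hG.1.dist_triangle
          have e5 : G.dist x₁ x = 1 := dist_eq_one_iff_adj.mpr h'.symm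
          have e6 : G.dist x y = 1 := dist_eq_one_iff_adj.mpr hxy
          have e7 : G.dist y x₁ = G.dist x₁ y := SimpleGraph.dist_comm
          omega
        obtain ⟨m, ⟨m1, m2, m3⟩, -⟩ := hG.2 x₁ y b
        have e8 : G.dist m y = G.dist y m := SimpleGraph.dist_comm
        have hx1m : G.dist x₁ m = 1 := by omega
        have hmy : G.dist m y = 1 := by omega
        have hmb : G.dist m b = k - 1 := by omega
        have hadjx1m : G.Adj x₁ m := dist_eq_one_iff_adj.mp hx1m
        have hadjmy : G.Adj m y := dist_eq_one_iff_adj.mp hmy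
        have hma : G.dist m a = k := by
          have c := adj_dist_cases hG hadjx1m a
          have e9 : G.dist a x₁ = G.dist x₁ a := SimpleGraph.dist_comm
          have e10 : G.dist a m = G.dist m a := SimpleGraph.dist_comm
          have t1 : G.dist y a ≤ G.dist y m + G.dist m a := hG.1.dist_triangle
          omega
        have hprev : Relation.EqvGen (SquareOpposite G) s(a, b) s(x₁, m) := by
          apply ih (k - 1) (by omega) x₁ m hx1a hadjx1m <;> omega
        refine hprev.trans _ _ _ (Relation.EqvGen.rel _ _ ?_)
        refine ⟨x₁, m, x, y, hadjx1m.ne, h'.ne', ?_, ?_, hadjmy.ne, hxy.ne, hadjx1m, hxy,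
          h'.symm, hadjmy, rfl, rfl⟩
        · intro h; rw [h] at hx1y; simp [SimpleGraph.dist_self] at hx1y
        · intro h; rw [h] at hmb; omega

lemma theta (hG : MedianGraph G) {a b x y : V} (hab : G.Adj a b) (hxy : G.Adj x y)
    (h : Opp G a b x y) : Relation.EqvGen (SquareOpposite G) s(a, b) s(x, y) := by
  rcases h with ⟨h1, h2⟩ | ⟨h1, h2⟩
  · exact theta_aux hG hab _ x y rfl hxy h1 h2
  · have := theta_aux hG hab _ y x rfl hxy.symm h2 h1
    rwa [show s(y, x) = s(x, y) from Sym2.eq_swap] at this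

end MGAux
namespace MGAux
open SimpleGraph

variable {V : Type*} {G : SimpleGraph V}

lemma edges_get : ∀ {u v : V} (w : G.Walk u v) (i : ℕ) (h : i < w.edges.length),
    w.edges.get ⟨i, h⟩ = s(w.getVert i, w.getVert (i + 1))
  | _, _, Walk.cons h' p, 0, h => by
      simp [Walk.getVert_zero, Walk.getVert_cons_succ]
  | _, _, Walk.cons h' p, (i + 1), h => by
      simp only [Walk.edges_cons, List.get_cons_succ, Walk.getVert_cons_succ]
      exact edges_get p i (by simpa [Walk.edges_cons] using h)

lemma mem_edges {u v : V} (w : G.Walk u v) {i : ℕ} (h : i < w.length) :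
    s(w.getVert i, w.getVert (i + 1)) ∈ w.edges := by
  have h' : i < w.edges.length := by rwa [Walk.length_edges]
  rw [← edges_get w i h']
  exact List.get_mem _ _

lemma dist_getVert_le (hc : G.Connected) {u v : V} (w : G.Walk u v) :
    ∀ q p : ℕ, p ≤ q → q ≤ w.length → G.dist (w.getVert p) (w.getVert q) ≤ q - p := by
  intro q
  induction q with
  | zero => intro p hp _; have : p = 0 := by omega
            subst this; simp [SimpleGraph.dist_self]
  | succ q ihq =>
    intro p hp hq
    rcases Nat.eq_or_lt_of_le hp with h | h
    · subst h; simp [SimpleGraph.dist_self]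
    · have hp' : p ≤ q := by omega
      have t : G.dist (w.getVert p) (w.getVert (q + 1)) ≤
          G.dist (w.getVert p) (w.getVert q) + G.dist (w.getVert q) (w.getVert (q + 1)) :=
        hc.dist_triangle
      have hadj : G.Adj (w.getVert q) (w.getVert (q + 1)) := w.adj_getVert_succ (by omega)
      have h1 : G.dist (w.getVert q) (w.getVert (q + 1)) = 1 := dist_eq_one_iff_adj.mpr hadj
      have := ihq p hp' (by omega)
      omega

lemma geo_seg (hc : G.Connected) {u v : V} {w : G.Walk u v} (hw : w.length = G.dist u v)
    {p q : ℕ} (hpq : p ≤ q) (hq : q ≤ w.length) :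
    G.dist (w.getVert p) (w.getVert q) = q - p := by
  have h1 : G.dist (w.getVert p) (w.getVert q) ≤ q - p := dist_getVert_le hc w q p hpq hq
  have h2 : G.dist (w.getVert 0) (w.getVert p) ≤ p - 0 := dist_getVert_le hc w p 0 (by omega) (by omega)
  have h3 : G.dist (w.getVert q) (w.getVert w.length) ≤ w.length - q :=
    dist_getVert_le hc w w.length q hq le_rfl
  rw [Walk.getVert_zero] at h2
  rw [Walk.getVert_length] at h3
  have t1 : G.dist u v ≤ G.dist u (w.getVert p) + G.dist (w.getVert p) v := hc.dist_triangle
  have t2 : G.dist (w.getVert p) v ≤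
      G.dist (w.getVert p) (w.getVert q) + G.dist (w.getVert q) v := hc.dist_triangle
  omega

lemma geo_sep {u v : V} (hc : G.Connected) {w : G.Walk u v} (hw : w.length = G.dist u v)
    {i j : ℕ} (hij : i < j) (hj : j < w.length) :
    ¬ Opp G (w.getVert j) (w.getVert (j + 1)) (w.getVert i) (w.getVert (i + 1)) := by
  have d1 : G.dist (w.getVert i) (w.getVert j) = j - i := geo_seg hc hw (by omega) (by omega)
  have d2 : G.dist (w.getVert i) (w.getVert (j + 1)) = j + 1 - i := geo_seg hc hw (by omega) (by omega)
  have d3 : G.dist (w.getVert (i + 1)) (w.getVert j) = j - (i + 1) := geo_seg hc hw (by omega) (by omega)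
  have d4 : G.dist (w.getVert (i + 1)) (w.getVert (j + 1)) = j + 1 - (i + 1) :=
    geo_seg hc hw (by omega) (by omega)
  unfold Opp
  omega

lemma ivt (hG : MedianGraph G) {a b : V} (hab : G.Adj a b) {u v : V} (w : G.Walk u v) :
    ∀ j i : ℕ, i ≤ j → j ≤ w.length → Opp G a b (w.getVert i) (w.getVert j) →
      ∃ k, i ≤ k ∧ k < j ∧ Opp G a b (w.getVert k) (w.getVert (k + 1))  := by
  intro j
  induction j with
  | zero =>
    intro i hi _ h
    have : i = 0 := by omega
    subst this
    rw [opp_char hG hab] at h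
    exact absurd Iff.rfl h
  | succ j ihj =>
    intro i hi hj h
    rcases Nat.eq_or_lt_of_le hi with h' | h'
    · subst h'
      rw [opp_char hG hab] at h
      exact absurd Iff.rfl h
    · have hi' : i ≤ j := by omega
      by_cases hcase : Opp G a b (w.getVert j) (w.getVert (j + 1))
      · exact ⟨j, hi', by omega, hcase⟩
      · have hxj : Opp G a b (w.getVert i) (w.getVert j) := by
          rw [opp_char hG hab] at h hcase ⊢
          tauto
        obtain ⟨k, hk1, hk2, hk3⟩ := ihj i hi' (by omega) hxj
        exact ⟨k, hk1, by omega, hk3⟩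

lemma sep_of_opp (hG : MedianGraph G) {a b u v : V} (hab : G.Adj a b)
    (hopp : Opp G a b u v) :
    SeparatedBy G {f | Relation.EqvGen (SquareOpposite G) s(a, b) f} u v := by
  intro w
  have h0 : Opp G a b (w.getVert 0) (w.getVert w.length) := by
    rwa [Walk.getVert_zero, Walk.getVert_length]
  obtain ⟨k, -, hk2, hk3⟩ := ivt hG hab w w.length 0 (by omega) le_rfl h0
  have hadj : G.Adj (w.getVert k) (w.getVert (k + 1)) := w.adj_getVert_succ hk2
  exact ⟨s(w.getVert k, w.getVert (k + 1)), mem_edges w hk2, theta hG hab hadj hk3⟩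

lemma cls_eq {e f : Sym2 V} (h : Relation.EqvGen (SquareOpposite G) e f) :
    {g | Relation.EqvGen (SquareOpposite G) e g} = {g | Relation.EqvGen (SquareOpposite G) f g} := by
  ext g
  constructor
  · exact fun hg => Relation.EqvGen.trans _ _ _ (Relation.EqvGen.symm _ _ h) hg
  · exact fun hg => Relation.EqvGen.trans _ _ _ h hg

end MGAux
namespace MGAux
open SimpleGraph

variable {V : Type*} {G : SimpleGraph V}

lemma edges_get' {u v : V} (w : G.Walk u v) (i : Fin w.edges.length) :
    w.edges.get i = s(w.getVert i, w.getVert (i + 1)) := by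
  rcases i with ⟨i, hi⟩
  exact edges_get w i hi

lemma geo_not_rel (hG : MedianGraph G) {u v : V} {w : G.Walk u v}
    (hw : w.length = G.dist u v) {i j : ℕ} (hij : i < j) (hj : j < w.length)
    (hrel : Relation.EqvGen (SquareOpposite G) s(w.getVert i, w.getVert (i + 1))
      s(w.getVert j, w.getVert (j + 1))) : False := by
  have heq := eopp_eqvgen hG hrel
  have h1 : Opp G (w.getVert i) (w.getVert (i + 1)) (w.getVert i) (w.getVert (i + 1)) :=
    opp_self_edge (w.adj_getVert_succ (by omega))
  apply geo_sep hG.1 hw hij hj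
  have hcast := congrFun (congrFun heq (w.getVert i)) (w.getVert (i + 1))
  exact eopp_mk.mp (hcast ▸ eopp_mk.mpr h1)

end MGAux


open MGAux SimpleGraph

/-- In a median graph, a walk is a geodesic iff it crosses each hyperplane at most
once; in particular the set of hyperplanes separating two vertices is finite of
cardinality the distance between them. -/
theorem geodesic_iff_crosses_each_hyperplane_once {V : Type*} (G : SimpleGraph V)
    (hG : MedianGraph G) (u v : V) :
    (∀ w : G.Walk u v,
        w.length = G.dist u v ↔
          ∀ H : Set (Sym2 V), IsHyperplane G H →
            {i : Fin w.edges.length | w.edges.get i ∈ H}.Subsingleton) ∧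
      {H : Set (Sym2 V) | IsHyperplane G H ∧ SeparatedBy G H u v}.Finite ∧
      {H : Set (Sym2 V) | IsHyperplane G H ∧ SeparatedBy G H u v}.ncard = G.dist u v := by
  classical
  have hc : G.Connected := hG.1
  obtain ⟨w₀, hw₀⟩ := hc.exists_walk_length_eq_dist u v
  set S : Set (Set (Sym2 V)) := {H | IsHyperplane G H ∧ SeparatedBy G H u v} with hS
  let φ : Fin (G.dist u v) → Set (Sym2 V) := fun i =>
    {f | Relation.EqvGen (SquareOpposite G) s(w₀.getVert i, w₀.getVert (i + 1)) f}
  have claim1 : ∀ i : Fin (G.dist u v), φ i ∈ S := by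
    intro i
    have hi : (i : ℕ) < w₀.length := by rw [hw₀]; exact i.2
    have hadj := w₀.adj_getVert_succ hi
    refine ⟨⟨_, G.mem_edgeSet.mpr hadj, rfl⟩, ?_⟩
    apply sep_of_opp hG hadj
    have d1 : G.dist (w₀.getVert 0) (w₀.getVert (i : ℕ)) = (i : ℕ) - 0 :=
      geo_seg hc hw₀ (by omega) (by omega)
    have d2 : G.dist (w₀.getVert 0) (w₀.getVert ((i : ℕ) + 1)) = (i : ℕ) + 1 - 0 :=
      geo_seg hc hw₀ (by omega) (by omega)
    have d3 : G.dist (w₀.getVert ((i : ℕ) + 1)) (w₀.getVert w₀.length) = w₀.length - ((i : ℕ) + 1) :=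
      geo_seg hc hw₀ (by omega) le_rfl
    have d4 : G.dist (w₀.getVert (i : ℕ)) (w₀.getVert w₀.length) = w₀.length - (i : ℕ) :=
      geo_seg hc hw₀ (by omega) le_rfl
    rw [Walk.getVert_zero] at d1 d2
    rw [Walk.getVert_length] at d3 d4
    have c3 : G.dist v (w₀.getVert ((i : ℕ) + 1)) = w₀.length - ((i : ℕ) + 1) := by
      rwa [SimpleGraph.dist_comm]
    have c4 : G.dist v (w₀.getVert (i : ℕ)) = w₀.length - (i : ℕ) := by
      rwa [SimpleGraph.dist_comm]
    exact Or.inl ⟨by omega, by omega⟩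
  have claim_inj : Function.Injective φ := by
    intro i j hij
    rcases lt_trichotomy (i : ℕ) (j : ℕ) with h | h | h
    · exfalso
      have hj : (j : ℕ) < w₀.length := by rw [hw₀]; exact j.2
      refine geo_not_rel hG hw₀ h hj ?_
      have : s(w₀.getVert (j : ℕ), w₀.getVert ((j : ℕ) + 1)) ∈ φ j := Relation.EqvGen.refl _
      rw [← hij] at this
      exact this
    · exact Fin.ext h
    · exfalso
      have hi : (i : ℕ) < w₀.length := by rw [hw₀]; exact i.2
      refine geo_not_rel hG hw₀ h hi ?_
      have : s(w₀.getVert (i : ℕ), w₀.getVert ((i : ℕ) + 1)) ∈ φ i := Relation.EqvGen.refl _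
      rw [hij] at this
      exact this
  have claim3 : S = Set.range φ := by
    ext H
    constructor
    · rintro ⟨⟨e₀, he₀, rfl⟩, hsep⟩
      obtain ⟨e, hemem, heH⟩ := hsep w₀
      obtain ⟨⟨i, hi⟩, hei⟩ := List.mem_iff_get.mp hemem
      have hi' : i < w₀.length := by rwa [Walk.length_edges] at hi
      have hedge : e = s(w₀.getVert i, w₀.getVert (i + 1)) := by
        rw [← hei, edges_get]
      refine ⟨⟨i, by omega⟩, ?_⟩
      have hrel : Relation.EqvGen (SquareOpposite G) e₀ s(w₀.getVert i, w₀.getVert (i + 1)) :=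
        hedge ▸ heH
      exact (cls_eq hrel).symm
    · rintro ⟨i, rfl⟩
      exact claim1 i
  have hfin : S.Finite := by rw [claim3]; exact Set.finite_range φ
  have hncard : S.ncard = G.dist u v := by
    rw [claim3, ← Set.image_univ, Set.ncard_image_of_injective _ claim_inj, Set.ncard_univ,
      Nat.card_eq_fintype_card, Fintype.card_fin]
  refine ⟨?_, hfin, hncard⟩
  intro w
  constructor
  · intro hlen H hH
    obtain ⟨e₀, he₀, rfl⟩ := hH
    intro i hi j hj
    simp only [Set.mem_setOf_eq, edges_get'] at hi hj
    rcases lt_trichotomy (i : ℕ) (j : ℕ) with h | h | h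
    · exfalso
      have hjl : (j : ℕ) < w.length := by rw [← Walk.length_edges]; exact j.2
      exact geo_not_rel hG hlen h hjl
        (Relation.EqvGen.trans _ _ _ (Relation.EqvGen.symm _ _ hi) hj)
    · exact Fin.ext h
    · exfalso
      have hil : (i : ℕ) < w.length := by rw [← Walk.length_edges]; exact i.2
      exact geo_not_rel hG hlen h hil
        (Relation.EqvGen.trans _ _ _ (Relation.EqvGen.symm _ _ hj) hi)
  · intro h
    have hle : G.dist u v ≤ w.length := SimpleGraph.dist_le w
    have key : ∀ i : ℕ, i < w.length →
        {f | Relation.EqvGen (SquareOpposite G) s(w.getVert i, w.getVert (i + 1)) f} ∈ S := by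
      intro i hi
      have hadj := w.adj_getVert_succ hi
      have hhyp : IsHyperplane G
          {f | Relation.EqvGen (SquareOpposite G) s(w.getVert i, w.getVert (i + 1)) f} :=
        ⟨_, G.mem_edgeSet.mpr hadj, rfl⟩
      refine ⟨hhyp, ?_⟩
      apply sep_of_opp hG hadj
      by_contra hnopp
      have hsub := h _ hhyp
      have hOi : Opp G (w.getVert i) (w.getVert (i + 1)) (w.getVert i) (w.getVert (i + 1)) :=
        opp_self_edge hadj
      have contra : ∀ k : ℕ, k < w.length → k ≠ i →
          Opp G (w.getVert i) (w.getVert (i + 1)) (w.getVert k) (w.getVert (k + 1)) → False := by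
        intro k hk hki hOk
        have hkadj := w.adj_getVert_succ hk
        have hkl : k < w.edges.length := by rw [Walk.length_edges]; omega
        have hil : i < w.edges.length := by rw [Walk.length_edges]; omega
        have hmem1 : (⟨k, hkl⟩ : Fin w.edges.length) ∈
            {i' : Fin w.edges.length | w.edges.get i' ∈
              {f | Relation.EqvGen (SquareOpposite G) s(w.getVert i, w.getVert (i + 1)) f}} := by
          simp only [Set.mem_setOf_eq, edges_get]
          exact theta hG hadj hkadj hOk
        have hmem2 : (⟨i, hil⟩ : Fin w.edges.length) ∈
            {i' : Fin w.edges.length | w.edges.get i' ∈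
              {f | Relation.EqvGen (SquareOpposite G) s(w.getVert i, w.getVert (i + 1)) f}} := by
          simp only [Set.mem_setOf_eq, edges_get]
          exact Relation.EqvGen.refl _
        have := hsub hmem1 hmem2
        exact hki (by simpa using congrArg Fin.val this)
      by_cases hcase : Opp G (w.getVert i) (w.getVert (i + 1)) u (w.getVert i)
      · have h0 : Opp G (w.getVert i) (w.getVert (i + 1)) (w.getVert 0) (w.getVert i) := by
          rwa [Walk.getVert_zero]
        obtain ⟨k, -, hk2, hk3⟩ := ivt hG hadj w i 0 (by omega) (by omega) h0
        exact contra k (by omega) (by omega) hk3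
      · have h0 : Opp G (w.getVert i) (w.getVert (i + 1)) (w.getVert (i + 1))
            (w.getVert w.length) := by
          rw [Walk.getVert_length]
          rw [opp_char hG hadj] at hnopp hcase hOi ⊢
          tauto
        obtain ⟨k, hk1, hk2, hk3⟩ := ivt hG hadj w w.length (i + 1) (by omega) le_rfl h0
        exact contra k (by omega) (by omega) hk3
    let ψ : Fin w.length → S := fun i => ⟨_, key i i.2⟩
    have hinj : Function.Injective ψ := by
      intro i j hij
      have hsets : {f | Relation.EqvGen (SquareOpposite G)
            s(w.getVert (i : ℕ), w.getVert ((i : ℕ) + 1)) f} =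
          {f | Relation.EqvGen (SquareOpposite G)
            s(w.getVert (j : ℕ), w.getVert ((j : ℕ) + 1)) f} :=
        congrArg Subtype.val hij
      have hil : (i : ℕ) < w.edges.length := by rw [Walk.length_edges]; exact i.2
      have hjl : (j : ℕ) < w.edges.length := by rw [Walk.length_edges]; exact j.2
      have hhyp : IsHyperplane G {f | Relation.EqvGen (SquareOpposite G)
          s(w.getVert (i : ℕ), w.getVert ((i : ℕ) + 1)) f} :=
        ⟨_, G.mem_edgeSet.mpr (w.adj_getVert_succ i.2), rfl⟩
      have hsub := h _ hhyp
      have hmem1 : (⟨(i : ℕ), hil⟩ : Fin w.edges.length) ∈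
          {i' : Fin w.edges.length | w.edges.get i' ∈
            {f | Relation.EqvGen (SquareOpposite G)
              s(w.getVert (i : ℕ), w.getVert ((i : ℕ) + 1)) f}} := by
        simp only [Set.mem_setOf_eq, edges_get]
        exact Relation.EqvGen.refl _
      have hmem2 : (⟨(j : ℕ), hjl⟩ : Fin w.edges.length) ∈
          {i' : Fin w.edges.length | w.edges.get i' ∈
            {f | Relation.EqvGen (SquareOpposite G)
              s(w.getVert (i : ℕ), w.getVert ((i : ℕ) + 1)) f}} := by
        simp only [Set.mem_setOf_eq, edges_get]
        show s(w.getVert (j : ℕ), w.getVert ((j : ℕ) + 1)) ∈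
          {f | Relation.EqvGen (SquareOpposite G)
            s(w.getVert (i : ℕ), w.getVert ((i : ℕ) + 1)) f}
        rw [hsets]
        exact Relation.EqvGen.refl _
      have := hsub hmem1 hmem2
      exact Fin.ext (by simpa using congrArg Fin.val this)
    have hfin' : Finite ↥S := hfin.to_subtype
    have hcard : w.length ≤ S.ncard := by
      calc w.length = Nat.card (Fin w.length) := by simp
        _ ≤ Nat.card ↥S := Nat.card_le_card_of_injective ψ hinj
        _ = S.ncard := Nat.card_coe_set_eq _
    omega
end

section
/- Serre's theorem on elliptic actions on trees: let T be a nonempty tree and let a group G act on T by automorphisms. Suppose G is generated by elements g_1, …, g_n such that, setting g_0 = 1, the product g_i g_j fixes some vertex of T for all 0 ≤ i < j ≤ n (in particular each generator fixes a vertex). Then G fixes a vertex: there is a vertex v of T with g·v = v for every g in G. -/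
/-!
The fixed-point set of an automorphism of a tree is a subtree, and subtrees of a tree satisfy
Helly's theorem: pairwise intersecting finitely many subtrees have a common vertex. So it suffices
that any two generators `s = g i`, `t = g j` have a common fixed vertex. If `s t` fixes `v`, then
`s⁻¹ v = t v`. An elliptic automorphism `φ` fixes the midpoint of the geodesic from `x` to `φ x`
(it is where the geodesics from a fixed vertex to `x` and to `φ x` branch), so the midpoint of the
geodesic from `v` to `t v = s⁻¹ v` is fixed by both `t` and `s⁻¹`.
-/

open Function

namespace SimpleGraph

variable {V V' : Type*} {G : SimpleGraph V} {G' : SimpleGraph V'} {u v w x y : V}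

theorem edist_map_le (f : G →g G') (u v : V) : G'.edist (f u) (f v) ≤ G.edist u v := by
  by_cases hr : G.Reachable u v
  · obtain ⟨p, hp⟩ := hr.exists_walk_length_eq_edist
    rw [← hp, ← Walk.length_map f]
    exact edist_le _
  · exact edist_eq_top_of_not_reachable hr ▸ le_top

theorem Iso.edist_eq (φ : G ≃g G') (u v : V) : G'.edist (φ u) (φ v) = G.edist u v :=
  le_antisymm (edist_map_le φ.toHom u v) <| by
    simpa using edist_map_le φ.symm.toHom (φ u) (φ v)

theorem Iso.dist_eq (φ : G ≃g G') (u v : V) : G'.dist (φ u) (φ v) = G.dist u v := by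
  simp only [dist, φ.edist_eq]

theorem Walk.IsPath.append {p : G.Walk u v} {q : G.Walk v w} (hp : p.IsPath) (hq : q.IsPath)
    (h : ∀ t ∈ p.support, t ∈ q.support → t = v) : (p.append q).IsPath := by
  have hq' := hq.support_nodup
  rw [← q.cons_tail_support, List.nodup_cons] at hq'
  rw [Walk.isPath_def, Walk.support_append]
  refine hp.support_nodup.append hq'.2 fun t htp htq => ?_
  obtain rfl := h t htp (List.mem_of_mem_tail htq)
  exact hq'.1 htq

namespace IsAcyclic

variable (hG : G.IsAcyclic) {p : G.Walk u v}
include hG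

theorem eq_of_isPath {q : G.Walk u v} (hp : p.IsPath) (hq : q.IsPath) : p = q :=
  congrArg Subtype.val ((hG.subsingleton_path u v).elim ⟨p, hp⟩ ⟨q, hq⟩)

theorem length_eq_dist (hp : p.IsPath) : p.length = G.dist u v := by
  obtain ⟨q, hq, hlen⟩ := p.reachable.exists_path_of_dist
  rw [hG.eq_of_isPath hp hq, hlen]

theorem dist_add_dist_of_mem_support (hp : p.IsPath) (hw : w ∈ p.support) :
    G.dist u w + G.dist w v = G.dist u v := by
  classical
  rw [← hG.length_eq_dist hp, ← hG.length_eq_dist (hp.takeUntil hw),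
    ← hG.length_eq_dist (hp.dropUntil hw), ← Walk.length_append, Walk.take_spec]

theorem getVert_dist (hp : p.IsPath) (hw : w ∈ p.support) : p.getVert (G.dist u w) = w := by
  classical
  rw [← hG.length_eq_dist (hp.takeUntil hw), Walk.getVert_length_takeUntil]

theorem eq_of_mem_support_of_dist_eq {w' : V} (hp : p.IsPath) (hw : w ∈ p.support)
    (hw' : w' ∈ p.support) (h : G.dist u w = G.dist u w') : w = w' := by
  rw [← hG.getVert_dist hp hw, ← hG.getVert_dist hp hw', h]

end IsAcyclic

/-- In a tree these are exactly the vertex sets of subtrees. -/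
def IsGeodesicallyConvex (G : SimpleGraph V) (S : Set V) : Prop :=
  ∀ ⦃x⦄, x ∈ S → ∀ ⦃y⦄, y ∈ S → ∀ w, G.dist x w + G.dist w y = G.dist x y → w ∈ S

theorem IsGeodesicallyConvex.inter {S S' : Set V} (hS : G.IsGeodesicallyConvex S)
    (hS' : G.IsGeodesicallyConvex S') : G.IsGeodesicallyConvex (S ∩ S') :=
  fun _ hx _ hy w hw => ⟨hS hx.1 hy.1 w hw, hS' hx.2 hy.2 w hw⟩

namespace IsTree

variable (hT : G.IsTree)
include hT

theorem mem_support_of_dist_add_dist_eq {p : G.Walk x y} (hp : p.IsPath)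
    (h : G.dist x w + G.dist w y = G.dist x y) : w ∈ p.support := by
  obtain ⟨q, hq⟩ := hT.connected.exists_walk_length_eq_dist x w
  obtain ⟨r, hr⟩ := hT.connected.exists_walk_length_eq_dist w y
  have hqr : (q.append r).IsPath := (q.append r).isPath_of_length_eq_dist (by simp [hq, hr, h])
  rw [hT.isAcyclic.eq_of_isPath hp hqr, Walk.mem_support_append_iff]
  exact Or.inl q.end_mem_support

theorem eq_of_dist_add_dist_eq {w' : V} (hw : G.dist x w + G.dist w y = G.dist x y)
    (hw' : G.dist x w' + G.dist w' y = G.dist x y) (h : G.dist x w = G.dist x w') : w = w' := by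
  obtain ⟨p, hp, -⟩ := hT.connected.exists_path_of_dist x y
  exact hT.isAcyclic.eq_of_mem_support_of_dist_eq hp
    (hT.mem_support_of_dist_add_dist_eq hp hw) (hT.mem_support_of_dist_add_dist_eq hp hw') h

theorem exists_median (x y z : V) : ∃ c,
    G.dist x c + G.dist c y = G.dist x y ∧ G.dist x c + G.dist c z = G.dist x z ∧
      G.dist y c + G.dist c z = G.dist y z := by
  classical
  obtain ⟨p, hp, -⟩ := hT.connected.exists_path_of_dist y z
  obtain ⟨c, hcp, hmin⟩ := p.support.toFinset.exists_min_image (G.dist x) ⟨y, by simp⟩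
  rw [List.mem_toFinset] at hcp
  obtain ⟨q, hq, -⟩ := hT.connected.exists_path_of_dist x c
  -- by minimality of `G.dist x c` on `p`
  have hqp : ∀ t ∈ q.support, t ∈ p.support → t = c := fun t htq htp => by
    have := hT.isAcyclic.dist_add_dist_of_mem_support hq htq
    have := hmin t (List.mem_toFinset.2 htp)
    exact (hT.connected.dist_eq_zero_iff).1 (by omega)
  have hy : (q.append (p.takeUntil c hcp).reverse).IsPath :=
    hq.append (hp.takeUntil hcp).reverse fun t htq htp => hqp t htq <|
      p.support_takeUntil_subset_support hcp <| by
        rwa [Walk.support_reverse, List.mem_reverse] at htp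
  have hz : (q.append (p.dropUntil c hcp)).IsPath :=
    hq.append (hp.dropUntil hcp) fun t htq htp =>
      hqp t htq (p.support_dropUntil_subset_support hcp htp)
  have hc : ∀ {t} (r : G.Walk c t), c ∈ (q.append r).support := fun r =>
    (Walk.mem_support_append_iff _ _).2 (Or.inl q.end_mem_support)
  exact ⟨c, hT.isAcyclic.dist_add_dist_of_mem_support hy (hc _),
    hT.isAcyclic.dist_add_dist_of_mem_support hz (hc _),
    hT.isAcyclic.dist_add_dist_of_mem_support hp hcp⟩

theorem isGeodesicallyConvex_fixedPoints (φ : G ≃g G) :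
    G.IsGeodesicallyConvex (fixedPoints φ) := by
  intro x hx y hy w hw
  have hφw : G.dist x (φ w) + G.dist (φ w) y = G.dist x y := by
    rwa [← hx.eq, ← hy.eq, φ.dist_eq, φ.dist_eq, φ.dist_eq]
  exact hT.eq_of_dist_add_dist_eq hφw hw (by rw [← φ.dist_eq x w, hx.eq])

theorem inter_inter_nonempty {A B C : Set V} (hA : G.IsGeodesicallyConvex A)
    (hB : G.IsGeodesicallyConvex B) (hC : G.IsGeodesicallyConvex C) (hAB : (A ∩ B).Nonempty)
    (hAC : (A ∩ C).Nonempty) (hBC : (B ∩ C).Nonempty) : (A ∩ B ∩ C).Nonempty := by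
  obtain ⟨x, hxA, hxB⟩ := hAB
  obtain ⟨y, hyA, hyC⟩ := hAC
  obtain ⟨z, hzB, hzC⟩ := hBC
  obtain ⟨c, hxy, hxz, hyz⟩ := hT.exists_median x y z
  exact ⟨c, ⟨hA hxA hyA c hxy, hB hxB hzB c hxz⟩, hC hyC hzC c hyz⟩

theorem helly_theorem {ι : Type*} {s : Finset ι} (hs : s.Nonempty) {A : ι → Set V}
    (hA : ∀ i ∈ s, G.IsGeodesicallyConvex (A i))
    (hAA : ∀ i ∈ s, ∀ j ∈ s, (A i ∩ A j).Nonempty) : ∃ v, ∀ i ∈ s, v ∈ A i := by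
  induction hs using Finset.Nonempty.cons_induction generalizing A with
  | singleton i =>
    obtain ⟨v, hv, -⟩ := hAA i (Finset.mem_singleton_self i) i (Finset.mem_singleton_self i)
    exact ⟨v, fun j hj => Finset.mem_singleton.1 hj ▸ hv⟩
  | cons i s _ hs ih =>
    have hAi := hA i (Finset.mem_cons_self i s)
    have hAs : ∀ j ∈ s, G.IsGeodesicallyConvex (A j) := fun j hj => hA j (Finset.mem_cons_of_mem hj)
    -- the family `A i ∩ A j` over `s` is pairwise intersecting by the case of three sets
    obtain ⟨v, hv⟩ := ih (A := fun j => A i ∩ A j) (fun j hj => hAi.inter (hAs j hj))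
      fun j hj k hk => by
        obtain ⟨v, ⟨hvi, hvj⟩, hvk⟩ := hT.inter_inter_nonempty hAi (hAs j hj) (hAs k hk)
          (hAA _ (Finset.mem_cons_self i s) _ (Finset.mem_cons_of_mem hj))
          (hAA _ (Finset.mem_cons_self i s) _ (Finset.mem_cons_of_mem hk))
          (hAA _ (Finset.mem_cons_of_mem hj) _ (Finset.mem_cons_of_mem hk))
        exact ⟨v, ⟨hvi, hvj⟩, hvi, hvk⟩
    refine ⟨v, fun j hj => ?_⟩
    obtain ⟨w, hw⟩ := hs
    rcases Finset.mem_cons.1 hj with rfl | hj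
    · exact (hv w hw).1
    · exact (hv j hj).2

theorem exists_isFixedPt_midpoint (φ : G ≃g G) {a : V} (ha : IsFixedPt φ a) (x : V) :
    ∃ c, IsFixedPt φ c ∧ G.dist x c + G.dist c (φ x) = G.dist x (φ x) ∧
      G.dist x c = G.dist c (φ x) := by
  obtain ⟨c, hax, haφx, hxφx⟩ := hT.exists_median a x (φ x)
  have hdist : G.dist a (φ x) = G.dist a x := by rw [← φ.dist_eq a x, ha.eq]
  have hφc : G.dist a (φ c) + G.dist (φ c) (φ x) = G.dist a (φ x) := by
    rwa [← ha.eq, φ.dist_eq, φ.dist_eq, φ.dist_eq]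
  refine ⟨c, hT.eq_of_dist_add_dist_eq hφc haφx (by rw [← φ.dist_eq a c, ha.eq]), hxφx, ?_⟩
  rw [dist_comm]
  omega

theorem exists_common_isFixedPt (φ ψ : G ≃g G) (hφ : ∃ a, IsFixedPt φ a)
    (hψ : ∃ b, IsFixedPt ψ b) (hφψ : ∃ v, IsFixedPt (φ ∘ ψ) v) :
    ∃ c, IsFixedPt φ c ∧ IsFixedPt ψ c := by
  obtain ⟨a, ha⟩ := hφ
  obtain ⟨b, hb⟩ := hψ
  obtain ⟨v, hv⟩ := hφψ
  have hφv : φ.symm v = ψ v := φ.symm_apply_eq.2 hv.symm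
  obtain ⟨c, hψc, hc, hc₂⟩ := hT.exists_isFixedPt_midpoint ψ hb v
  obtain ⟨c', hφc', hc'₁, hc'₂⟩ :=
    hT.exists_isFixedPt_midpoint φ.symm (ha.equiv_symm (e := φ.toEquiv)) v
  rw [hφv] at hc'₁ hc'₂
  obtain rfl : c' = c := hT.eq_of_dist_add_dist_eq hc'₁ hc (by omega)
  exact ⟨_, IsFixedPt.equiv_symm_iff (e := φ.toEquiv).1 hφc', hψc⟩

end IsTree

end SimpleGraph

/-- Serre's theorem: if a group acting on a tree is generated by `g 0 = 1, g 1, …, g n`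
such that each product `g i * g j` (for `i < j`) fixes a vertex, then the whole group
fixes a vertex. -/
theorem serre_elliptic_on_tree {V : Type*} (T : SimpleGraph V) (hT : T.IsTree)
    {Γ : Type*} [Group Γ] [MulAction Γ V]
    (hact : ∀ (g : Γ) (u v : V), T.Adj u v ↔ T.Adj (g • u) (g • v))
    (n : ℕ) (g : Fin (n + 1) → Γ) (hg0 : g 0 = 1)
    (hgen : Subgroup.closure (Set.range g) = ⊤)
    (hfix : ∀ i j : Fin (n + 1), i < j → ∃ v : V, (g i * g j) • v = v) :
    ∃ v : V, ∀ k : Γ, k • v = v := by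
  let ρ (k : Γ) : T ≃g T := ⟨MulAction.toPerm k, (hact k _ _).symm⟩
  have hρ_apply (k : Γ) (v : V) : ρ k v = k • v := rfl
  have hρ : ∀ i j, i < j → ∃ v, IsFixedPt (ρ (g i) ∘ ρ (g j)) v := fun i j hij => by
    simpa [IsFixedPt, hρ_apply, mul_smul] using hfix i j hij
  have hell : ∀ i, ∃ v, IsFixedPt (ρ (g i)) v := fun i => by
    rcases (Fin.zero_le i).eq_or_lt with rfl | hi
    · obtain ⟨v⟩ := hT.connected.nonempty
      exact ⟨v, by simp [IsFixedPt, hρ_apply, hg0]⟩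
    · simpa [IsFixedPt, hρ_apply, hg0] using hρ 0 i hi
  have hpair : ∀ i j, i < j → (fixedPoints (ρ (g i)) ∩ fixedPoints (ρ (g j))).Nonempty :=
    fun i j hij => hT.exists_common_isFixedPt _ _ (hell i) (hell j) (hρ i j hij)
  obtain ⟨v, hv⟩ := hT.helly_theorem Finset.univ_nonempty
    (fun i _ => hT.isGeodesicallyConvex_fixedPoints (ρ (g i))) fun i _ j _ => by
      rcases lt_trichotomy i j with hij | rfl | hji
      · exact hpair i j hij
      · obtain ⟨v, hv⟩ := hell i
        exact ⟨v, hv, hv⟩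
      · exact Set.inter_comm _ _ ▸ hpair j i hji
  have hstab : Subgroup.closure (Set.range g) ≤ MulAction.stabilizer Γ v :=
    (Subgroup.closure_le _).2 (Set.range_subset_iff.2 fun i => hv i (Finset.mem_univ i))
  exact ⟨v, fun k => hstab (hgen ▸ Subgroup.mem_top k)⟩
end

section
/- Let T be a nonempty tree and let G be a finitely generated group acting on T by automorphisms such that every element of G fixes some vertex of T. Then there is a vertex of T fixed by every element of G. -/
/-!
Serre's argument. The fixed set of an automorphism of a tree is convex, and a point of a convex
set nearest to a given vertex `a` lies on the path from `a` to every other point of the set.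
If `h`, `k` and `h * k` all fix vertices, then for `x` fixed by `h * k` we have `k • x = h⁻¹ • x`,
and the nearest fixed points of `k` and of `h⁻¹` to `x` are both the midpoint of the path from
`x` to this vertex; so `h` and `k` have a common fixed point.

By induction on a finite generating set `s ∪ {k}`: take `a` fixed by `s` and `b` the fixed point
of `k` nearest to `a`. For `h ∈ s`, a common fixed point `y` of `h` and `k` has `b` on the path
from `a` to `y`, whence `h • b = b`. A vertex fixed by the generators is fixed by the group.
-/

open MulAction

namespace SimpleGraph

variable {V : Type*} {G : SimpleGraph V}

def IsPathConvex (G : SimpleGraph V) (C : Set V) : Prop :=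
  ∀ ⦃x y : V⦄ (p : G.Walk x y), p.IsPath → x ∈ C → y ∈ C → ∀ z ∈ p.support, z ∈ C

theorem Walk.IsPath.append_of_forall_mem_support {u v w : V} {p : G.Walk u v} {q : G.Walk v w}
    (hp : p.IsPath) (hq : q.IsPath) (h : ∀ z ∈ p.support, z ∈ q.support → z = v) :
    (p.append q).IsPath := by
  rw [Walk.isPath_def, Walk.support_append]
  refine hp.support_nodup.append (hq.support_nodup.sublist q.support.tail_sublist)
    fun z hzp hzq => ?_
  obtain rfl := h z hzp (List.mem_of_mem_tail hzq)
  have hnodup := hq.support_nodup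
  rw [← q.cons_tail_support] at hnodup
  exact (List.nodup_cons.1 hnodup).1 hzq

theorem exists_mem_forall_dist_le (G : SimpleGraph V) (a : V) {C : Set V} (hC : C.Nonempty) :
    ∃ b ∈ C, ∀ z ∈ C, G.dist a b ≤ G.dist a z :=
  ⟨_, Function.argminOn_mem _ C hC, fun _ hz => Function.argminOn_le _ C hz⟩

def smulHom {Γ : Type*} [SMul Γ V] (hact : ∀ (g : Γ) (u v : V), G.Adj u v → G.Adj (g • u) (g • v))
    (g : Γ) : G →g G where
  toFun := (g • ·)
  map_rel' := hact g _ _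

namespace IsTree

variable {T : SimpleGraph V} (hT : T.IsTree)

noncomputable def path (x y : V) : T.Walk x y := (hT.existsUnique_path x y).exists.choose

theorem isPath_path (x y : V) : (hT.path x y).IsPath :=
  (hT.existsUnique_path x y).exists.choose_spec

theorem eq_path {x y : V} {p : T.Walk x y} (hp : p.IsPath) : p = hT.path x y :=
  (hT.existsUnique_path x y).unique hp (hT.isPath_path x y)

theorem length_path (x y : V) : (hT.path x y).length = T.dist x y := by
  obtain ⟨p, hp, hlen⟩ := hT.connected.exists_path_of_dist x y
  rw [← hT.eq_path hp, hlen]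

theorem mem_support_path_comm {x y z : V} :
    z ∈ (hT.path x y).support ↔ z ∈ (hT.path y x).support := by
  rw [← hT.eq_path (hT.isPath_path y x).reverse, Walk.support_reverse, List.mem_reverse]

theorem dist_add_dist_of_mem_support_path {x y z : V} (hz : z ∈ (hT.path x y).support) :
    T.dist x z + T.dist z y = T.dist x y := by
  classical
  have hp := hT.isPath_path x y
  rw [← hT.length_path, ← hT.length_path, ← hT.length_path, ← hT.eq_path (hp.takeUntil hz),
    ← hT.eq_path (hp.dropUntil hz), ← Walk.length_append, Walk.take_spec]

theorem eq_of_mem_support_path_of_dist_eq {x y u w : V} (hu : u ∈ (hT.path x y).support)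
    (hw : w ∈ (hT.path x y).support) (h : T.dist x u = T.dist x w) : u = w := by
  classical
  have hp := hT.isPath_path x y
  have hlen : ∀ {z} (hz : z ∈ (hT.path x y).support),
      ((hT.path x y).takeUntil z hz).length = T.dist x z := fun hz => by
    rw [hT.eq_path (hp.takeUntil hz), hT.length_path]
  rw [← Walk.getVert_length_takeUntil hu, ← Walk.getVert_length_takeUntil hw, hlen, hlen, h]

theorem eq_of_mem_support_path_of_forall_dist_le {C : Set V} {a b z : V}
    (hmin : ∀ c ∈ C, T.dist a b ≤ T.dist a c) (hz : z ∈ (hT.path a b).support) (hzC : z ∈ C) :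
    z = b := by
  have hsum := hT.dist_add_dist_of_mem_support_path hz
  have hle := hmin z hzC
  exact (hT.connected.dist_eq_zero_iff).1 (by omega)

theorem mem_support_path_of_forall_dist_le {C : Set V} (hC : T.IsPathConvex C) {a b y : V}
    (hb : b ∈ C) (hmin : ∀ c ∈ C, T.dist a b ≤ T.dist a c) (hy : y ∈ C) :
    b ∈ (hT.path a y).support := by
  have hpath : ((hT.path a b).append (hT.path b y)).IsPath :=
    (hT.isPath_path a b).append_of_forall_mem_support (hT.isPath_path b y) fun z hz hz' =>
      hT.eq_of_mem_support_path_of_forall_dist_le hmin hz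
        (hC _ (hT.isPath_path b y) hb hy z hz')
  rw [← hT.eq_path hpath, Walk.mem_support_append_iff]
  exact Or.inl (Walk.end_mem_support _)

section Action

variable {Γ : Type*} [Group Γ] [MulAction Γ V]
  (hact : ∀ (g : Γ) (u v : V), T.Adj u v → T.Adj (g • u) (g • v))

include hT in
theorem map_path_smulHom (g : Γ) (x y : V) :
    (hT.path x y).map (smulHom hact g) = hT.path (g • x) (g • y) :=
  hT.eq_path ((hT.isPath_path x y).map (MulAction.injective g))

include hT hact in
theorem dist_smul_smul (g : Γ) (x y : V) : T.dist (g • x) (g • y) = T.dist x y := by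
  rw [← hT.length_path, ← hT.length_path, ← hT.map_path_smulHom hact]
  exact Walk.length_map _ _

include hact in
theorem smul_mem_support_path {g : Γ} {x y z : V} (hz : z ∈ (hT.path x y).support) :
    g • z ∈ (hT.path (g • x) (g • y)).support := by
  rw [← hT.map_path_smulHom hact]
  exact (Walk.support_map _ _).symm ▸ List.mem_map_of_mem hz

include hT hact in
theorem isPathConvex_fixedBy (g : Γ) : T.IsPathConvex (fixedBy V g) := by
  intro x y p hp hx hy z hz
  rw [hT.eq_path hp] at hz
  have hgz := hT.smul_mem_support_path hact (g := g) hz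
  rw [mem_fixedBy.1 hx, mem_fixedBy.1 hy] at hgz
  refine hT.eq_of_mem_support_path_of_dist_eq hgz hz ?_
  conv_lhs => rw [← mem_fixedBy.1 hx]
  exact hT.dist_smul_smul hact g x z

include hact in
/-- The path from `x` to `g • x` is the path from `x` to `α` followed by its image under `g`. -/
theorem mem_support_path_smul_of_forall_dist_le {g : Γ} {x α : V} (hα : α ∈ fixedBy V g)
    (hmin : ∀ c ∈ fixedBy V g, T.dist x α ≤ T.dist x c) :
    α ∈ (hT.path x (g • x)).support ∧ T.dist x (g • x) = 2 * T.dist x α := by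
  have hgα : g • α = α := hα
  have hpath : ((hT.path x α).append (hT.path α (g • x))).IsPath := by
    refine (hT.isPath_path x α).append_of_forall_mem_support (hT.isPath_path α (g • x))
      fun z hz hz' => hT.eq_of_mem_support_path_of_forall_dist_le hmin hz ?_
    have hz₁ : z ∈ (hT.path α x).support := (hT.mem_support_path_comm).1 hz
    have hz₂ := hT.smul_mem_support_path hact (g := g⁻¹) hz'
    have hgα' : g⁻¹ • α = α := inv_smul_eq_iff.2 hgα.symm
    rw [inv_smul_smul, hgα'] at hz₂
    have hdist : T.dist α (g⁻¹ • z) = T.dist α z := by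
      conv_lhs => rw [← hgα']
      exact hT.dist_smul_smul hact g⁻¹ α z
    have := hT.eq_of_mem_support_path_of_dist_eq hz₂ hz₁ hdist
    rwa [inv_smul_eq_iff, eq_comm] at this
  rw [← hT.length_path x (g • x), ← hT.eq_path hpath, Walk.mem_support_append_iff,
    Walk.length_append, hT.length_path, hT.length_path]
  refine ⟨Or.inl (Walk.end_mem_support _), ?_⟩
  have hdist : T.dist α (g • x) = T.dist x α := by
    rw [← hT.dist_smul_smul hact g x α, hgα, dist_comm]
  omega

include hT hact in
theorem nonempty_fixedBy_inter_of_mul {h k : Γ} (hh : (fixedBy V h).Nonempty)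
    (hk : (fixedBy V k).Nonempty) (hhk : (fixedBy V (h * k)).Nonempty) :
    (fixedBy V h ∩ fixedBy V k).Nonempty := by
  obtain ⟨x, hx⟩ := hhk
  have hkx : k • x = h⁻¹ • x := by rw [eq_inv_smul_iff, ← mul_smul]; exact hx
  rw [← fixedBy_inv] at hh ⊢
  obtain ⟨α, hα, hαmin⟩ := T.exists_mem_forall_dist_le x hh
  obtain ⟨β, hβ, hβmin⟩ := T.exists_mem_forall_dist_le x hk
  obtain ⟨hαx, hdα⟩ := hT.mem_support_path_smul_of_forall_dist_le hact hα hαmin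
  obtain ⟨hβx, hdβ⟩ := hT.mem_support_path_smul_of_forall_dist_le hact hβ hβmin
  rw [← hkx] at hαx hdα
  obtain rfl : α = β := hT.eq_of_mem_support_path_of_dist_eq hαx hβx (by omega)
  exact ⟨α, hα, hβ⟩

include hT hact in
theorem exists_forall_mem_finset_smul_eq (hell : ∀ g : Γ, ∃ v : V, g • v = v) (s : Finset Γ) :
    ∃ v : V, ∀ g ∈ s, g • v = v := by
  classical
  induction s using Finset.induction_on with
  | empty => exact ⟨hT.connected.nonempty.some, by simp⟩
  | insert k s _ ih =>
    obtain ⟨a, ha⟩ := ih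
    obtain ⟨b, hb, hbmin⟩ := T.exists_mem_forall_dist_le a (hell k)
    refine ⟨b, (Finset.forall_mem_insert _ _ _).2 ⟨hb, fun h hs => ?_⟩⟩
    obtain ⟨y, hyh, hyk⟩ :=
      hT.nonempty_fixedBy_inter_of_mul hact ⟨a, ha h hs⟩ (hell k) (hell (h * k))
    exact hT.isPathConvex_fixedBy hact h _ (hT.isPath_path a y) (ha h hs) hyh b
      (hT.mem_support_path_of_forall_dist_le (hT.isPathConvex_fixedBy hact k) hb hbmin hyk)

end Action

end IsTree

end SimpleGraph

/-- A finitely generated group acting purely elliptically on a tree fixes a vertex. -/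
theorem purely_elliptic_on_tree_fixes_vertex {V : Type*} (T : SimpleGraph V)
    (hT : T.IsTree) {Γ : Type*} [Group Γ] [Group.FG Γ] [MulAction Γ V]
    (hact : ∀ (g : Γ) (u v : V), T.Adj u v ↔ T.Adj (g • u) (g • v))
    (hell : ∀ g : Γ, ∃ v : V, g • v = v) :
    ∃ v : V, ∀ g : Γ, g • v = v := by
  obtain ⟨S, hS⟩ := Group.fg_def.1 ‹Group.FG Γ›
  obtain ⟨v, hv⟩ :=
    hT.exists_forall_mem_finset_smul_eq (fun g u v => (hact g u v).1) hell S
  have hstab : Subgroup.closure (S : Set Γ) ≤ stabilizer Γ v := (Subgroup.closure_le _).2 hv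
  exact ⟨v, fun g => hstab (hS ▸ Subgroup.mem_top g)⟩
end

section
/- Let G = ⊕_{i∈ℤ} ℤ/2ℤ (the group of finitely supported functions from ℤ to ℤ/2ℤ under addition) and, for every integer n ≥ 1, let G_n be the subgroup of G consisting of the functions vanishing outside the interval [−n, n]. Let 𝒯 be the graph whose vertices are the pairs (n, C) where n ≥ 1 and C is a coset in G/G_n, two vertices (n, C) and (m, D) being adjacent if and only if |m − n| = 1 and one of the cosets C, D is contained in the other as subsets of G. Then: (i) 𝒯 is a tree (connected and acyclic); (ii) the action of G on 𝒯 induced by left translation on cosets is purely elliptic (every element of G fixes a vertex); and (iii) the orbits of this action are unbounded: for every vertex v of 𝒯 and every N ∈ ℕ there exists g ∈ G with dist(v, g·v) > N. -/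
/-!
The vertex `(n, C)` has exactly one neighbour on the level above, its *parent*
`(n + 1, C + G_{n+1})`; all its other neighbours lie on the level below. So a cycle would
have a lowest vertex whose two cycle-neighbours are both its parent, and `𝒯` is acyclic.
Every `g` lies in some `G_n`, which makes `𝒯` connected and makes `g` fix each vertex of
level `n`. On the other hand, below level `m` the coset of `G_m` containing a vertex's
coset is constant along paths, so a path joining two vertices whose cosets lie in different
cosets of `G_m` climbs to level `m`; translating by a basis vector at a far-away position
produces such a pair with `m` as large as we like.
-/

/-- The group `⊕_{i ∈ ℤ} ℤ/2ℤ` of finitely supported functions `ℤ → ℤ/2ℤ`. -/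
abbrev Lam : Type := ℤ →₀ ZMod 2

/-- The subgroup `G_n` of functions vanishing outside `[-n, n]`. -/
noncomputable def Gn (n : ℕ) : AddSubgroup Lam where
  carrier := {f : Lam | ∀ i : ℤ, ¬(-(n : ℤ) ≤ i ∧ i ≤ (n : ℤ)) → f i = 0}
  zero_mem' := by intro i _; simp
  add_mem' := by
    intro a b ha hb i hi
    simp [Finsupp.add_apply, ha i hi, hb i hi]
  neg_mem' := by
    intro a ha i hi
    simp [Finsupp.neg_apply, ha i hi]

/-- The subset of `Lam` corresponding to a coset `C ∈ Lam ⧸ Gn n`. -/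
def cosetSet (n : ℕ) (C : Lam ⧸ Gn n) : Set Lam :=
  {g : Lam | (QuotientAddGroup.mk g : Lam ⧸ Gn n) = C}

/-- Vertices: pairs `(n, C)` with `n ≥ 1` and `C` a coset in `Lam ⧸ Gn n`
(encoded with index `n + 1`). -/
def TVert : Type := Σ n : ℕ, Lam ⧸ Gn (n + 1)

/-- The graph `𝒯`: `(n, C)` and `(m, D)` are adjacent iff `|m - n| = 1` and one of
the cosets `C`, `D` is contained in the other as subsets of `Lam`. -/
def treeGraph : SimpleGraph TVert where
  Adj p q := ((p.1 : ℤ) - (q.1 : ℤ)).natAbs = 1 ∧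
    (cosetSet (p.1 + 1) p.2 ⊆ cosetSet (q.1 + 1) q.2 ∨
     cosetSet (q.1 + 1) q.2 ⊆ cosetSet (p.1 + 1) p.2)
  symm := by
    constructor
    rintro ⟨n, C⟩ ⟨m, D⟩ ⟨h1, h2⟩
    exact ⟨by omega, h2.symm⟩
  loopless := by
    constructor
    rintro ⟨n, C⟩ ⟨h1, -⟩
    omega

/-- The action of `Lam` on `𝒯` induced by left translation on cosets. -/
noncomputable def act (g : Lam) (p : TVert) : TVert :=
  ⟨p.1, QuotientAddGroup.mk g + p.2⟩

namespace SimpleGraph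

theorem isAcyclic_of_unique_upper_neighbor {V α : Type*} [LinearOrder α]
    {G : SimpleGraph V} (f : V → α)
    (h : ∀ ⦃v u w⦄, G.Adj v u → G.Adj v w → f v ≤ f u → f v ≤ f w → u = w) :
    G.IsAcyclic := by
  classical
  intro v c hc
  obtain ⟨w, hw, hmin⟩ :=
    c.support.toFinset.exists_min_image f ⟨v, List.mem_toFinset.mpr c.start_mem_support⟩
  rw [List.mem_toFinset] at hw
  have hc' := hc.rotate hw
  have hle : ∀ x ∈ (c.rotate w hw).support, f w ≤ f x := fun x hx =>
    hmin x (List.mem_toFinset.mpr ((c.mem_support_rotate_iff w hw).mp hx))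
  -- at a vertex of minimal height both cycle neighbours lie above it, so they coincide
  exact hc'.snd_ne_penultimate <| h (Walk.adj_snd hc'.not_nil)
    (Walk.adj_penultimate hc'.not_nil).symm
    (hle _ (Walk.getVert_mem_support _ _)) (hle _ (Walk.getVert_mem_support _ _))

end SimpleGraph

open QuotientAddGroup

lemma Gn_mono {a b : ℕ} (hab : a ≤ b) : Gn a ≤ Gn b :=
  fun _ hf i hi => hf i fun hc => hi ⟨by omega, by omega⟩

lemma single_mem_Gn_iff {a : ℕ} {m : ℤ} :
    Finsupp.single m (1 : ZMod 2) ∈ Gn a ↔ -(a : ℤ) ≤ m ∧ m ≤ a := by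
  refine ⟨fun h => by_contra fun hm => ?_, fun hm i hi => ?_⟩
  · simpa using h m hm
  · exact Finsupp.single_eq_of_ne (by rintro rfl; exact hi hm)

lemma eventually_mem_Gn (x : Lam) : ∀ᶠ n in Filter.atTop, x ∈ Gn n := by
  refine Filter.eventually_atTop.mpr ⟨x.support.sup Int.natAbs, fun n hn i hi => ?_⟩
  by_contra hx
  have := (Finset.le_sup (f := Int.natAbs) (Finsupp.mem_support_iff.mpr hx)).trans hn
  omega

lemma cosetSet_mk_subset_iff {a b : ℕ} (hab : a ≤ b) (x : Lam) (D : Lam ⧸ Gn b) :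
    cosetSet a (mk x) ⊆ cosetSet b D ↔ (mk x : Lam ⧸ Gn b) = D := by
  refine ⟨fun hsub => hsub (rfl : (mk x : Lam ⧸ Gn a) = mk x), ?_⟩
  rintro rfl y (hy : (mk y : Lam ⧸ Gn a) = mk x)
  rw [QuotientAddGroup.eq_iff_sub_mem] at hy
  exact QuotientAddGroup.eq_iff_sub_mem.mpr (Gn_mono hab hy)

lemma not_cosetSet_subset {a b : ℕ} (hab : a < b) (C : Lam ⧸ Gn a) (D : Lam ⧸ Gn b) :
    ¬ cosetSet b D ⊆ cosetSet a C := by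
  intro hsub
  obtain ⟨x, rfl⟩ := mk_surjective D
  -- `x` and `x + e_b` lie in the same coset of `G_b` but in different cosets of `G_a`
  set e : Lam := Finsupp.single (b : ℤ) 1
  have hxe : x + e ∈ cosetSet b (mk x) := by
    refine QuotientAddGroup.eq_iff_sub_mem.mpr ?_
    simpa [e] using single_mem_Gn_iff.mpr ⟨by omega, le_rfl⟩
  have hx : (mk (x + e) : Lam ⧸ Gn a) = mk x :=
    (hsub hxe).trans (hsub (rfl : (mk x : Lam ⧸ Gn b) = mk x)).symm
  rw [QuotientAddGroup.eq_iff_sub_mem, add_sub_cancel_left, single_mem_Gn_iff] at hx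
  omega

/-- The coset of `Gn m` containing the coset `v.2`; a junk value unless `v.1 < m`. -/
noncomputable def coarseCoset (m : ℕ) (v : TVert) : Lam ⧸ Gn m :=
  mk v.2.out

lemma coarseCoset_mk {k m : ℕ} (h : k < m) (x : Lam) :
    coarseCoset m ⟨k, mk x⟩ = mk x := by
  have hx : (mk (mk x : Lam ⧸ Gn (k + 1)).out : Lam ⧸ Gn (k + 1)) = mk x := out_eq' _
  rw [QuotientAddGroup.eq_iff_sub_mem] at hx
  exact QuotientAddGroup.eq_iff_sub_mem.mpr (Gn_mono h hx)

lemma act_mk (g : Lam) (k : ℕ) (x : Lam) : act g ⟨k, mk x⟩ = ⟨k, mk (g + x)⟩ :=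
  congrArg (Sigma.mk k) (QuotientAddGroup.mk_add _ g x).symm

lemma coarseCoset_act {m : ℕ} (g : Lam) {v : TVert} (h : v.1 < m) :
    coarseCoset m (act g v) = mk g + coarseCoset m v := by
  obtain ⟨k, C⟩ := v
  obtain ⟨x, rfl⟩ := mk_surjective C
  rw [act_mk, coarseCoset_mk h, coarseCoset_mk h, QuotientAddGroup.mk_add]

lemma act_neg_act (g : Lam) (p : TVert) : act (-g) (act g p) = p := by
  obtain ⟨k, C⟩ := p
  obtain ⟨x, rfl⟩ := mk_surjective C
  rw [act_mk, act_mk, neg_add_cancel_left]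

lemma act_injective (g : Lam) : Function.Injective (act g) :=
  Function.LeftInverse.injective (g := act (-g)) (act_neg_act g)

lemma act_eq_self_of_mem {g : Lam} {p : TVert} (h : g ∈ Gn (p.1 + 1)) : act g p = p := by
  obtain ⟨k, C⟩ := p
  exact congrArg (Sigma.mk k) (by rw [(QuotientAddGroup.eq_zero_iff g).mpr h, zero_add])

noncomputable def parent (p : TVert) : TVert :=
  ⟨p.1 + 1, coarseCoset (p.1 + 2) p⟩

lemma parent_mk (k : ℕ) (x : Lam) : parent ⟨k, mk x⟩ = ⟨k + 1, mk x⟩ := by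
  show (⟨k + 1, coarseCoset (k + 2) ⟨k, mk x⟩⟩ : TVert) = _
  rw [coarseCoset_mk (by omega)]

lemma coarseCoset_parent {m : ℕ} {p : TVert} (h : p.1 + 1 < m) :
    coarseCoset m (parent p) = coarseCoset m p := by
  obtain ⟨k, C⟩ := p
  obtain ⟨x, rfl⟩ := mk_surjective C
  dsimp only at h
  rw [parent_mk, coarseCoset_mk h, coarseCoset_mk (by omega)]

lemma act_parent (g : Lam) (p : TVert) : act g (parent p) = parent (act g p) := by
  obtain ⟨k, C⟩ := p
  obtain ⟨x, rfl⟩ := mk_surjective C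
  rw [parent_mk, act_mk, act_mk, parent_mk]

lemma adj_parent (p : TVert) : treeGraph.Adj p (parent p) := by
  obtain ⟨k, C⟩ := p
  obtain ⟨x, rfl⟩ := mk_surjective C
  rw [parent_mk]
  exact ⟨by simp, Or.inl ((cosetSet_mk_subset_iff (Nat.le_succ _) x _).mpr rfl)⟩

lemma fst_le_fst_add_one_of_adj {p q : TVert} (h : treeGraph.Adj p q) : q.1 ≤ p.1 + 1 := by
  have := h.1
  omega

lemma eq_parent_of_adj {p q : TVert} (h : treeGraph.Adj p q) (hpq : p.1 ≤ q.1) :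
    q = parent p := by
  have hlev : q.1 = p.1 + 1 := by
    have := h.1
    omega
  obtain ⟨n, C⟩ := p
  obtain ⟨m, D⟩ := q
  obtain ⟨x, rfl⟩ := mk_surjective C
  dsimp only at hlev
  subst hlev
  rcases h.2 with hsub | hsub
  · rw [parent_mk, (cosetSet_mk_subset_iff (Nat.le_succ _) x D).mp hsub]
  · exact absurd hsub (not_cosetSet_subset (Nat.lt_succ_self _) _ _)

lemma adj_iff_eq_parent {p q : TVert} : treeGraph.Adj p q ↔ q = parent p ∨ p = parent q := by
  refine ⟨fun h => ?_, ?_⟩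
  · rcases le_total p.1 q.1 with hle | hle
    exacts [Or.inl (eq_parent_of_adj h hle), Or.inr (eq_parent_of_adj h.symm hle)]
  · rintro (rfl | rfl)
    exacts [adj_parent p, (adj_parent q).symm]

lemma adj_act_iff (g : Lam) {p q : TVert} :
    treeGraph.Adj (act g p) (act g q) ↔ treeGraph.Adj p q := by
  simp only [adj_iff_eq_parent, ← act_parent, (act_injective g).eq_iff]

lemma reachable_of_fst_le {n m : ℕ} (h : n ≤ m) (x : Lam) :
    treeGraph.Reachable ⟨n, mk x⟩ ⟨m, mk x⟩ := by
  induction m, h using Nat.le_induction with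
  | base => rfl
  | succ m _ ih => exact ih.trans (parent_mk m x ▸ (adj_parent _).reachable)

theorem treeGraph_connected : treeGraph.Connected := by
  refine treeGraph.connected_iff_exists_forall_reachable.mpr ⟨⟨0, mk 0⟩, fun ⟨n, C⟩ => ?_⟩
  obtain ⟨x, rfl⟩ := mk_surjective C
  obtain ⟨K, hn, hK⟩ :=
    ((Filter.eventually_ge_atTop n).and (eventually_mem_Gn x)).exists
  have hx : (mk x : Lam ⧸ Gn (K + 1)) = mk 0 :=
    QuotientAddGroup.eq_iff_sub_mem.mpr (by simpa using Gn_mono K.le_succ hK)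
  exact (reachable_of_fst_le K.zero_le 0).trans (hx ▸ (reachable_of_fst_le hn x).symm)

theorem treeGraph_isAcyclic : treeGraph.IsAcyclic :=
  SimpleGraph.isAcyclic_of_unique_upper_neighbor Sigma.fst fun _ _ _ hu hw hvu hvw =>
    (eq_parent_of_adj hu hvu).trans (eq_parent_of_adj hw hvw).symm

lemma fst_le_of_mem_support {p q x : TVert} (w : treeGraph.Walk p q) (hx : x ∈ w.support) :
    x.1 ≤ p.1 + w.length := by
  induction w with
  | nil => simp_all
  | cons h w ih =>
    rcases List.mem_cons.mp hx with rfl | hx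
    · omega
    · have := ih hx
      have := fst_le_fst_add_one_of_adj h
      rw [SimpleGraph.Walk.length_cons]
      omega

lemma coarseCoset_eq_of_walk {m : ℕ} {p q : TVert} (w : treeGraph.Walk p q)
    (hw : ∀ x ∈ w.support, x.1 < m) : coarseCoset m p = coarseCoset m q := by
  induction w with
  | nil => rfl
  | cons h w ih =>
    rw [← ih fun x hx => hw x (List.mem_cons_of_mem _ hx)]
    have hq := hw _ (List.mem_cons_of_mem _ w.start_mem_support)
    rcases adj_iff_eq_parent.mp h with rfl | rfl
    exacts [(coarseCoset_parent hq).symm, coarseCoset_parent (hw _ List.mem_cons_self)]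

/-- A geodesic from `p` to its translate by `e_{p.1 + N + 2}` must climb above level
`p.1 + N`, since below that level the coset of `G_{p.1 + N + 1}` is constant. -/
lemma lt_dist_act_single (p : TVert) (N : ℕ) :
    N < treeGraph.dist p (act (Finsupp.single ((p.1 : ℤ) + N + 2) 1) p) := by
  set g : Lam := Finsupp.single ((p.1 : ℤ) + N + 2) 1
  obtain ⟨w, hw⟩ := treeGraph_connected.exists_walk_length_eq_dist p (act g p)
  rw [← hw]
  by_contra! hlen
  have hcoarse := coarseCoset_eq_of_walk (m := p.1 + N + 1) w fun x hx => by
    have := fst_le_of_mem_support w hx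
    omega
  rw [coarseCoset_act g (by omega), right_eq_add, QuotientAddGroup.eq_zero_iff,
    single_mem_Gn_iff] at hcoarse
  omega

/-- `𝒯` is a tree, the translation action of `Lam = ⊕_ℤ ℤ/2ℤ` on it is an action by
graph automorphisms which is purely elliptic, yet all its orbits are unbounded. -/
theorem torsion_group_acts_purely_elliptically_with_unbounded_orbits :
    treeGraph.IsTree ∧
      (∀ (g : Lam) (p q : TVert), treeGraph.Adj p q ↔ treeGraph.Adj (act g p) (act g q)) ∧
      (∀ g : Lam, ∃ p : TVert, act g p = p) ∧
      (∀ p : TVert, ∀ N : ℕ, ∃ g : Lam, N < treeGraph.dist p (act g p)) := by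
  refine ⟨⟨treeGraph_connected, treeGraph_isAcyclic⟩, fun g p q => (adj_act_iff g).symm,
    fun g => ?_, fun p N => ⟨_, lt_dist_act_single p N⟩⟩
  obtain ⟨B, hB⟩ := (eventually_mem_Gn g).exists_forall_of_atTop
  exact ⟨⟨B, 0⟩, act_eq_self_of_mem (hB _ B.le_succ)⟩
end

section
/- Let G be a median graph and let d ≥ 1 be such that every set of pairwise transverse hyperplanes of G has at most d elements (G has dimension at most d). Then every finite set S of hyperplanes of G with |S| ≥ d + d(d+1) contains three hyperplanes that are pairwise disjoint. -/
/-- Two distinct hyperplanes are transverse if some 4-cycle contains an edge of each. -/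
def Transverse {V : Type*} (G : SimpleGraph V) (H₁ H₂ : Set (Sym2 V)) : Prop :=
  H₁ ≠ H₂ ∧ ∃ a b c d : V, a ≠ b ∧ a ≠ c ∧ a ≠ d ∧ b ≠ c ∧ b ≠ d ∧ c ≠ d ∧
    G.Adj a b ∧ G.Adj b c ∧ G.Adj c d ∧ G.Adj d a ∧
    (∃ e ∈ ({s(a, b), s(b, c), s(c, d), s(d, a)} : Set (Sym2 V)), e ∈ H₁) ∧
    (∃ e ∈ ({s(a, b), s(b, c), s(c, d), s(d, a)} : Set (Sym2 V)), e ∈ H₂)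

/-- Two hyperplanes are disjoint if they are distinct and not transverse. -/
def DisjointHyp {V : Type*} (G : SimpleGraph V) (H₁ H₂ : Set (Sym2 V)) : Prop :=
  H₁ ≠ H₂ ∧ ¬ Transverse G H₁ H₂

/-
The relation "transverse" is a simple graph on hyperplanes, and three pairwise disjoint
hyperplanes form a triangle in its complement. So the statement is the Ramsey-type bound
R(3, d + 1) ≤ d + d² + 1: take a maximal family C of pairwise transverse hyperplanes in S. It
has at most d members, and every other member of S is disjoint from some member of C. If no three
members of S are pairwise disjoint, the members of S disjoint from a fixed one are pairwise
transverse, so there are at most d of them; hence |S| ≤ d + d · d.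
-/

namespace SimpleGraph

variable {α : Type*} (K : SimpleGraph α)

lemma exists_compl_adj_of_maximal_clique {S C : Finset α}
    (hC : Maximal (fun T : Finset α => T ⊆ S ∧ K.IsClique (T : Set α)) C)
    {a : α} (ha : a ∈ S) (haC : a ∉ C) : ∃ u ∈ C, Kᶜ.Adj u a := by
  classical
  by_contra! h
  have hins : K.IsClique (insert a C : Finset α) := by
    rw [Finset.coe_insert, isClique_insert]
    refine ⟨hC.1.2, fun b hb hab => K.adj_symm ?_⟩
    by_contra hba
    exact h b hb ((compl_adj K b a).2 ⟨Ne.symm hab, hba⟩)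
  exact haC (hC.2 ⟨Finset.insert_subset ha hC.1.1, hins⟩ (Finset.subset_insert a C)
    (Finset.mem_insert_self a C))

variable {K}

lemma isClique_setOf_compl_adj {S : Finset α}
    (h3 : ∀ a ∈ S, ∀ b ∈ S, ∀ c ∈ S, Kᶜ.Adj a b → Kᶜ.Adj a c → ¬ Kᶜ.Adj b c)
    {a : α} (ha : a ∈ S) : K.IsClique {b | b ∈ S ∧ Kᶜ.Adj a b} := by
  intro b hb c hc hbc
  by_contra hn
  exact h3 a ha b hb.1 c hc.1 hb.2 hc.2 ((compl_adj K b c).2 ⟨hbc, hn⟩)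

theorem card_le_add_mul_of_compl_triangle_free {S : Finset α} {d : ℕ}
    (hclique : ∀ T ⊆ S, K.IsClique (T : Set α) → T.card ≤ d)
    (h3 : ∀ a ∈ S, ∀ b ∈ S, ∀ c ∈ S, Kᶜ.Adj a b → Kᶜ.Adj a c → ¬ Kᶜ.Adj b c) :
    S.card ≤ d + d * d := by
  classical
  obtain ⟨C, hC⟩ :=
    (S.powerset.filter fun T : Finset α => K.IsClique (T : Set α)).exists_maximal ⟨∅, by simp⟩
  simp only [Finset.mem_filter, Finset.mem_powerset] at hC
  have hCd : C.card ≤ d := hclique C hC.1.1 hC.1.2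
  set N : α → Finset α := fun u => S.filter (Kᶜ.Adj u)
  have hN : ∀ u ∈ C, (N u).card ≤ d := fun u hu =>
    hclique _ (Finset.filter_subset _ _)
      (by simpa [N] using isClique_setOf_compl_adj h3 (hC.1.1 hu))
  have hcover : S ⊆ C ∪ C.biUnion N := by
    intro a ha
    by_cases haC : a ∈ C
    · exact Finset.mem_union_left _ haC
    · obtain ⟨u, hu, hua⟩ := K.exists_compl_adj_of_maximal_clique hC ha haC
      exact Finset.mem_union_right _ (Finset.mem_biUnion.2 ⟨u, hu, Finset.mem_filter.2 ⟨ha, hua⟩⟩)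
  calc S.card ≤ (C ∪ C.biUnion N).card := Finset.card_le_card hcover
    _ ≤ C.card + (C.biUnion N).card := Finset.card_union_le _ _
    _ ≤ d + C.card * d := add_le_add hCd (Finset.card_biUnion_le_card_mul _ _ _ hN)
    _ ≤ d + d * d := by gcongr

end SimpleGraph

lemma Transverse.symm {V : Type*} {G : SimpleGraph V} {H₁ H₂ : Set (Sym2 V)}
    (h : Transverse G H₁ H₂) : Transverse G H₂ H₁ := by
  obtain ⟨hne, a, b, c, d, hab, hac, had, hbc, hbd, hcd, h₁, h₂, h₃, h₄, he₁, he₂⟩ := h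
  exact ⟨hne.symm, a, b, c, d, hab, hac, had, hbc, hbd, hcd, h₁, h₂, h₃, h₄, he₂, he₁⟩

def transverseGraph {V : Type*} (G : SimpleGraph V) : SimpleGraph (Set (Sym2 V)) where
  Adj := Transverse G
  symm := ⟨fun _ _ => Transverse.symm⟩
  loopless := ⟨fun _ h => h.1 rfl⟩

theorem three_pairwise_disjoint_of_many_hyperplanes_general {V : Type*} (G : SimpleGraph V)
    (d : ℕ) (hd : 1 ≤ d)
    (hdim : ∀ T : Set (Set (Sym2 V)), (∀ H ∈ T, IsHyperplane G H) →
      T.Pairwise (Transverse G) → T.Finite ∧ T.ncard ≤ d)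
    (S : Finset (Set (Sym2 V))) (hS : ∀ H ∈ S, IsHyperplane G H)
    (hcard : d + d * (d + 1) ≤ S.card) :
    ∃ H₁ ∈ S, ∃ H₂ ∈ S, ∃ H₃ ∈ S,
      DisjointHyp G H₁ H₂ ∧ DisjointHyp G H₁ H₃ ∧ DisjointHyp G H₂ H₃ := by
  by_contra hcon
  have hbound : S.card ≤ d + d * d :=
    (transverseGraph G).card_le_add_mul_of_compl_triangle_free
      (fun T hT hTcl => by
        simpa using (hdim T (fun H hH => hS H (hT hH)) hTcl).2)
      (fun A hA B hB C hC hAB hAC hBC => hcon ⟨A, hA, B, hB, C, hC, hAB, hAC, hBC⟩)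
  nlinarith

/-- In a median graph of dimension at most `d`, every finite family of at least
`d + d(d+1)` hyperplanes contains three pairwise disjoint hyperplanes. -/
theorem three_pairwise_disjoint_of_many_hyperplanes {V : Type*} (G : SimpleGraph V)
    (hG : MedianGraph G) (d : ℕ) (hd : 1 ≤ d)
    (hdim : ∀ T : Set (Set (Sym2 V)), (∀ H ∈ T, IsHyperplane G H) →
      T.Pairwise (Transverse G) → T.Finite ∧ T.ncard ≤ d)
    (S : Finset (Set (Sym2 V))) (hS : ∀ H ∈ S, IsHyperplane G H)
    (hcard : d + d * (d + 1) ≤ S.card) :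
    ∃ H₁ ∈ S, ∃ H₂ ∈ S, ∃ H₃ ∈ S,
      DisjointHyp G H₁ H₂ ∧ DisjointHyp G H₁ H₃ ∧ DisjointHyp G H₂ H₃ :=
  three_pairwise_disjoint_of_many_hyperplanes_general G d hd hdim S hS hcard
end
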